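/- Let U, V ∈ ℕ∖{1}, c ∈ (0,1) and t > 0. Set N_t = min{⌈U^t/(U−1)⌉·⌈V^{t+1}/(V−1)⌉ + ⌈V^t/(V−1)⌉·⌈U^t⌉, ⌈U^{t+1}/(U−1)⌉·⌈V^t/(V−1)⌉ + ⌈U^t/(U−1)⌉·⌈V^t⌉} and α(c,t) = (9(U−1)(V−1)N_t)^{1/c}(UV)^{−(1+t)}. If F ∈ RCD(U,V), then F ∪ (ℝ²∖B[0,1]) is (α(c,t), A_{U,V}, c, 1, 1)-winning. -/

import Mathlib

open scoped ENNReal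

/-- The axis-parallel closed box `A^t(B[0,r]) + y`, where `A` is the diagonal matrix with
diagonal entries `β j`: the set of `x` with `|x j - y j| ≤ (β j)^t * r` for every `j`. -/
def gameBox {n : ℕ} (β : Fin n → ℝ) (t r : ℝ) (y : Fin n → ℝ) : Set (Fin n → ℝ) :=
  {x | ∀ j, |x j - y j| ≤ β j ^ t * r}

/-- A legal move of Player II on turn `m + 1` (turns are indexed from `1` in the paper) of the
`(α, A, c, ρ₂, ρ₁)`-potential game: an at most countable collection of pairs `(q, y)` with
`q ≥ 1`, satisfying, when `c > 0`,
`Σ (∏_j β_j^q)^c ≤ (α ∏_j β_j^(m+1))^c`, and, when `c = 0`, consisting of at most one pair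
`(q, y)`, which must satisfy `∏_j β_j^q ≤ α ∏_j β_j^(m+1)`. The empty collection (a skip) is
always legal. -/
def LegalMove {n : ℕ} (β : Fin n → ℝ) (α c : ℝ) (m : ℕ)
    (M : Set (ℝ × (Fin n → ℝ))) : Prop :=
  M.Countable ∧ (∀ p ∈ M, 1 ≤ p.1) ∧
    (if 0 < c then
      ∑' p : M, ENNReal.ofReal ((∏ j, β j ^ p.1.1) ^ c)
        ≤ ENNReal.ofReal ((α * ∏ j, β j ^ (m + 1 : ℝ)) ^ c)
    else
      M.Subsingleton ∧ ∀ p ∈ M, (∏ j, β j ^ p.1) ≤ α * ∏ j, β j ^ (m + 1 : ℝ))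

/-- `S` is a winning set for Player II in the `(α, A, c, ρ₂, ρ₁)`-potential game, where `A` is
the diagonal matrix with diagonal entries `β j`.  Player I's play on turn `m + 1` is
`U_{m+1} = A^{m+1}(B[0,r]) + b m` with `ρ₂ ≤ r ≤ ρ₁` and `U_{m+2} ⊆ U_{m+1}`; a strategy for
Player II assigns to every finite history (the radius `r` together with the centres
`b 0, …, b m` of Player I's plays so far) a collection of pairs `(q, y)`, which must be a legal
move whenever the history is legal.  The strategy is winning for `S` if for every legal infinite
play in which Player II follows it, every point `x` of `⋂ U_m` which avoids the deleted region
`⋃_m ⋃_{(q,y)} (A^q(B[0,r]) + y)` lies in `S`. -/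
def IsWinning {n : ℕ} (β : Fin n → ℝ) (α c ρ₂ ρ₁ : ℝ) (S : Set (Fin n → ℝ)) : Prop :=
  ∃ σ : ℝ → (m : ℕ) → (Fin (m + 1) → (Fin n → ℝ)) → Set (ℝ × (Fin n → ℝ)),
    (∀ (r : ℝ) (m : ℕ) (b : Fin (m + 1) → (Fin n → ℝ)),
      ρ₂ ≤ r → r ≤ ρ₁ →
      (∀ i : Fin m,
        gameBox β ((i : ℕ) + 2 : ℝ) r (b i.succ) ⊆ gameBox β ((i : ℕ) + 1 : ℝ) r (b i.castSucc)) →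
      LegalMove β α c m (σ r m b)) ∧
    (∀ (r : ℝ) (b : ℕ → (Fin n → ℝ)),
      ρ₂ ≤ r → r ≤ ρ₁ →
      (∀ m : ℕ, gameBox β ((m : ℕ) + 2 : ℝ) r (b (m + 1)) ⊆ gameBox β ((m : ℕ) + 1 : ℝ) r (b m)) →
      ∀ x : Fin n → ℝ, (∀ m : ℕ, x ∈ gameBox β ((m : ℕ) + 1 : ℝ) r (b m)) →
        x ∉ ⋃ (m : ℕ), ⋃ p ∈ σ r m (fun i : Fin (m + 1) => b (i : ℕ)), gameBox β p.1 r p.2 →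
        x ∈ S)

/-- The family `𝒮(α, A, c, ρ₂)` of sets that are `(α, A, c, ρ₂, ρ₁)`-winning for some
`ρ₁ ≥ ρ₂`. -/
def winFamily {n : ℕ} (β : Fin n → ℝ) (α c ρ₂ : ℝ) : Set (Set (Fin n → ℝ)) :=
  {S | ∃ ρ₁ : ℝ, ρ₂ ≤ ρ₁ ∧ IsWinning β α c ρ₂ ρ₁ S}

/-- The diagonal entries `(U⁻¹, V⁻¹)` of the matrix `A_{U,V}`. -/
noncomputable def AUV (U V : ℕ) : Fin 2 → ℝ := ![((U : ℝ))⁻¹, ((V : ℝ))⁻¹]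

/-- `F` belongs to the Moran family `𝒞𝒟(U, V)`.  Level-`k` component rectangles are indexed
by words `ω` of length `k` over the alphabet `Fin (U-1) × Fin (V-1)` (the letter `(s, t)`
selecting the region in column `s + 1` and row `t + 1` of the parent rectangle); the rectangle
with index `ω` is `A_{U,V}^k(B[0,1]) + ctr ω`, a rectangle of width `2U^{-k}` and height
`2V^{-k}`.  The centre `ctr (ω ++ [i])` is obtained from `ctr ω` by translating to the centre of
the selected region and then to one of its four corners, according to the choice function
`corner`; `F` is the intersection over `k` of the unions of the level-`k` rectangles. -/
def RCD (U V : ℕ) (F : Set (Fin 2 → ℝ)) : Prop :=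
  ∃ (corner : List (Fin (U - 1) × Fin (V - 1)) → (Fin (U - 1) × Fin (V - 1)) → Bool × Bool)
    (ctr : List (Fin (U - 1) × Fin (V - 1)) → (Fin 2 → ℝ)),
    ctr [] = 0 ∧
    (∀ (ω : List (Fin (U - 1) × Fin (V - 1))) (i : Fin (U - 1) × Fin (V - 1)),
      (ctr (ω ++ [i]) 0 =
        ctr ω 0 + (2 * ((i.1 : ℕ) + 1 : ℝ) - U) / ((U : ℝ) ^ ω.length * ((U : ℝ) - 1))
          + (if (corner ω i).1 then (-1 : ℝ) else 1) /
              ((U : ℝ) ^ (ω.length + 1) * ((U : ℝ) - 1))) ∧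
      (ctr (ω ++ [i]) 1 =
        ctr ω 1 + (2 * ((i.2 : ℕ) + 1 : ℝ) - V) / ((V : ℝ) ^ ω.length * ((V : ℝ) - 1))
          + (if (corner ω i).2 then (-1 : ℝ) else 1) /
              ((V : ℝ) ^ (ω.length + 1) * ((V : ℝ) - 1)))) ∧
    F = ⋂ (k : ℕ),
      ⋃ ω ∈ {ω : List (Fin (U - 1) × Fin (V - 1)) | ω.length = k},
        gameBox (AUV U V) (k : ℝ) 1 (ctr ω)


open Real


/-- 1D grid covering lemma: an interval of half-length `h` centered at `a` is covered by `n`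
closed intervals of half-length `ρ` provided `h ≤ n ρ`. -/
lemma grid1d (a h ρ : ℝ) (n : ℕ) (hρ : 0 < ρ) (hn1 : 1 ≤ n) (hn : h ≤ n * ρ)
    (x : ℝ) (hx : |x - a| ≤ h) : ∃ k : ℕ, k < n ∧ |x - (a - h + (2 * k + 1) * ρ)| ≤ ρ := by
  have h0 : 0 ≤ h := le_trans (abs_nonneg _) hx
  rw [abs_le] at hx
  set d : ℝ := x - (a - h) with hd
  have hd0 : 0 ≤ d := by simp [hd]; linarith [hx.1]
  have hd2 : d ≤ 2 * (n * ρ) := by simp [hd]; linarith [hx.2]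
  have h2ρ : (0:ℝ) < 2 * ρ := by linarith
  set k0 : ℕ := ⌊d / (2 * ρ)⌋₊ with hk0
  rcases le_or_gt k0 (n - 1) with hcase | hcase
  · refine ⟨k0, ?_, ?_⟩
    · omega
    · have h1 : (k0 : ℝ) ≤ d / (2 * ρ) := Nat.floor_le (by positivity)
      have h2 : d / (2 * ρ) < k0 + 1 := Nat.lt_floor_add_one _
      rw [abs_le]
      have e : x - (a - h + (2 * k0 + 1) * ρ) = d - (2 * k0 + 1) * ρ := by simp [hd]; ring
      rw [e]
      constructor
      · nlinarith [(le_div_iff₀ h2ρ).mp h1]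
      · nlinarith [(div_lt_iff₀ h2ρ).mp h2]
  · refine ⟨n - 1, by omega, ?_⟩
    have hk0n : (n : ℝ) ≤ k0 := by exact_mod_cast Nat.le_of_lt_succ (by omega)
    have h1 : (k0 : ℝ) ≤ d / (2 * ρ) := Nat.floor_le (by positivity)
    have hdn : 2 * (n * ρ) ≤ d := by nlinarith [(le_div_iff₀ h2ρ).mp h1]
    have e : x - (a - h + (2 * (n - 1 : ℕ) + 1) * ρ) = d - (2 * (n - 1 : ℕ) + 1) * ρ := by
      simp [hd]; ring
    rw [abs_le, e]
    have : ((n - 1 : ℕ) : ℝ) = (n : ℝ) - 1 := by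
      have : (1:ℕ) ≤ n := hn1
      push_cast [Nat.cast_sub this]; ring
    rw [this]
    constructor <;> nlinarith

/-- a point of an interval which is not in the strip `c + εu ± (h-u)` is in the corner
interval `c - ε(h-u) ± u`. -/
lemma cornerSplit (c₀ h u x ε : ℝ) (hε : ε = 1 ∨ ε = -1) (hu : 0 < u) (huh : u ≤ h)
    (hx : |x - c₀| ≤ h) (hnot : ¬ |x - (c₀ + ε * u)| ≤ h - u) :
    |x - (c₀ - ε * (h - u))| ≤ u := by
  rw [abs_le] at hx
  rw [abs_le, not_and_or, not_le, not_le] at hnot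
  rw [abs_le]
  rcases hε with hε | hε <;> subst hε <;> rcases hnot with h1 | h1 <;> constructor <;> linarith


lemma ceil_ge_one {y : ℝ} (hy : 0 < y) : 1 ≤ ⌈y⌉ := Int.ceil_pos.mpr hy

lemma mul_ceil_div_ge (d : ℕ) (hd : 1 ≤ d) (y : ℝ) : (⌈y⌉ : ℤ) ≤ d * ⌈y / d⌉ := by
  have hd' : (0:ℝ) < d := by exact_mod_cast hd
  rw [Int.ceil_le]
  push_cast
  calc y = d * (y / d) := by field_simp
  _ ≤ d * ⌈y / d⌉ := by
      have := Int.le_ceil (y / (d:ℝ))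
      nlinarith

lemma ceil_base_mul (n : ℕ) (hn1 : 1 ≤ n) (y : ℝ) : (n:ℤ) * ⌈y⌉ - n + 1 ≤ ⌈(n:ℝ) * y⌉ := by
  rw [← Int.lt_iff_add_one_le, Int.lt_ceil]
  push_cast
  have h := Int.ceil_lt_add_one y
  have hn : (1:ℝ) ≤ n := by exact_mod_cast hn1
  nlinarith



noncomputable section

/-- rectangle halfwidth at level `m`, base `x` -/
def hw (x : ℝ) (m : ℕ) : ℝ := (x ^ m)⁻¹
/-- region halfwidth at level `m`, base `x` -/
def rg (x : ℝ) (m : ℕ) : ℝ := (x ^ m * (x - 1))⁻¹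

variable {x : ℝ}

lemma hw_pos (hx : 2 ≤ x) (m : ℕ) : 0 < hw x m := by
  have : (0:ℝ) < x := by linarith
  simp [hw]; positivity

lemma rg_pos (hx : 2 ≤ x) (m : ℕ) : 0 < rg x m := by
  have h1 : (0:ℝ) < x := by linarith
  have h2 : (0:ℝ) < x - 1 := by linarith
  rw [rg]
  exact inv_pos.mpr (by positivity)

lemma xpow_pos (hx : 2 ≤ x) (m : ℕ) : (0:ℝ) < x ^ m := by
  have : (0:ℝ) < x := by linarith
  positivity

lemma hw_succ (hx : 2 ≤ x) (m : ℕ) : hw x (m+1) = hw x m / x := by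
  have h1 : (0:ℝ) < x := by linarith
  rw [hw, hw, pow_succ]
  field_simp

lemma rg_eq (hx : 2 ≤ x) (m : ℕ) : rg x m = hw x m / (x - 1) := by
  have h1 : (0:ℝ) < x := by linarith
  have h2 : (0:ℝ) < x - 1 := by linarith
  rw [rg, hw]
  field_simp

lemma hw_succ_le_rg (hx : 2 ≤ x) (m : ℕ) : hw x (m+1) ≤ rg x m := by
  have h1 : (0:ℝ) < x := by linarith
  have h2 : (0:ℝ) < x - 1 := by linarith
  have hp := xpow_pos hx m
  rw [hw, rg, pow_succ]
  rw [inv_le_inv₀ (by positivity) (by positivity)]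
  nlinarith

lemma rg_sub (hx : 2 ≤ x) (m : ℕ) : rg x m - hw x (m+1) = rg x (m+1) := by
  have h1 : (0:ℝ) < x := by linarith
  have h2 : (0:ℝ) < x - 1 := by linarith
  have hp := xpow_pos hx m
  rw [rg, rg, hw, pow_succ]
  field_simp
  ring

lemma mul_rg (hx : 2 ≤ x) (m : ℕ) : (x - 1) * rg x m = hw x m := by
  have h1 : (0:ℝ) < x := by linarith
  have h2 : (0:ℝ) < x - 1 := by linarith
  have hp := xpow_pos hx m
  rw [rg, hw]
  field_simp

lemma hw_sub_hw (hx : 2 ≤ x) (m : ℕ) : hw x m - hw x (m+1) = (x - 1) * hw x (m+1) := by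
  have h1 : (0:ℝ) < x := by linarith
  have h2 : (0:ℝ) < x - 1 := by linarith
  have hp := xpow_pos hx m
  rw [hw, hw, pow_succ]
  field_simp

end

noncomputable section

abbrev Alp (U V : ℕ) := Fin (U-1) × Fin (V-1)

/-- the recursion hypothesis from `RCD` -/
def Hrec (U V : ℕ) (corner : List (Alp U V) → Alp U V → Bool × Bool)
    (ctr : List (Alp U V) → Fin 2 → ℝ) : Prop :=
  ∀ (ω : List (Alp U V)) (i : Alp U V),
      (ctr (ω ++ [i]) 0 =
        ctr ω 0 + (2 * ((i.1 : ℕ) + 1 : ℝ) - U) / ((U : ℝ) ^ ω.length * ((U : ℝ) - 1))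
          + (if (corner ω i).1 then (-1 : ℝ) else 1) /
              ((U : ℝ) ^ (ω.length + 1) * ((U : ℝ) - 1))) ∧
      (ctr (ω ++ [i]) 1 =
        ctr ω 1 + (2 * ((i.2 : ℕ) + 1 : ℝ) - V) / ((V : ℝ) ^ ω.length * ((V : ℝ) - 1))
          + (if (corner ω i).2 then (-1 : ℝ) else 1) /
              ((V : ℝ) ^ (ω.length + 1) * ((V : ℝ) - 1)))

variable {U V : ℕ}

/-- centre of the region of `ω`'s rectangle selected by letter `a` -/
def regionCtr (ctr : List (Alp U V) → Fin 2 → ℝ) (ω : List (Alp U V)) (a : Alp U V) :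
    Fin 2 → ℝ :=
  ![ctr ω 0 + (2 * (((a.1 : ℕ) : ℝ) + 1) - U) * rg (U:ℝ) ω.length,
    ctr ω 1 + (2 * (((a.2 : ℕ) : ℝ) + 1) - V) * rg (V:ℝ) ω.length]

section geom
variable (hU : 2 ≤ U) (hV : 2 ≤ V)
variable {corner : List (Alp U V) → Alp U V → Bool × Bool} {ctr : List (Alp U V) → Fin 2 → ℝ}
variable (hrec : Hrec U V corner ctr)

lemma hu2 (hU : 2 ≤ U) : (2:ℝ) ≤ (U:ℝ) := by exact_mod_cast hU
lemma hv2 (hV : 2 ≤ V) : (2:ℝ) ≤ (V:ℝ) := by exact_mod_cast hV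

/-- sign of the corner, x coordinate -/
def epsx (corner : List (Alp U V) → Alp U V → Bool × Bool) (ω : List (Alp U V)) (a : Alp U V) : ℝ :=
  if (corner ω a).1 then 1 else -1
def epsy (corner : List (Alp U V) → Alp U V → Bool × Bool) (ω : List (Alp U V)) (a : Alp U V) : ℝ :=
  if (corner ω a).2 then 1 else -1

lemma epsx_one : epsx corner ω a = 1 ∨ epsx corner ω a = -1 := by
  unfold epsx; split <;> simp
lemma epsy_one : epsy corner ω a = 1 ∨ epsy corner ω a = -1 := by
  unfold epsy; split <;> simp

include hrec in
lemma childCtr₀ (ω : List (Alp U V)) (a : Alp U V) :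
    ctr (ω ++ [a]) 0 = regionCtr ctr ω a 0 - epsx corner ω a * rg (U:ℝ) (ω.length + 1) := by
  rw [(hrec ω a).1]
  unfold regionCtr epsx rg
  cases h : (corner ω a).1 <;>
    simp [h, Matrix.cons_val_zero, div_eq_mul_inv, pow_succ] <;> push_cast <;> ring

include hrec in
lemma childCtr₁ (ω : List (Alp U V)) (a : Alp U V) :
    ctr (ω ++ [a]) 1 = regionCtr ctr ω a 1 - epsy corner ω a * rg (V:ℝ) (ω.length + 1) := by
  rw [(hrec ω a).2]
  unfold regionCtr epsy rg
  cases h : (corner ω a).2 <;>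
    simp [h, Matrix.cons_val_one, div_eq_mul_inv, pow_succ] <;> push_cast <;> ring
end geom


section geom2
variable {corner : List (Alp U V) → Alp U V → Bool × Bool} {ctr : List (Alp U V) → Fin 2 → ℝ}

lemma nat_cast_sep {n k : ℕ} (h : n ≠ k) : 1 ≤ |(n:ℝ) - (k:ℝ)| := by
  rcases lt_or_gt_of_ne h with h1 | h1
  · have h2 : (n:ℝ) + 1 ≤ k := by exact_mod_cast h1
    rw [abs_sub_comm, abs_of_pos (by linarith)]
    linarith
  · have h2 : (k:ℝ) + 1 ≤ n := by exact_mod_cast h1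
    rw [abs_of_pos (by linarith)]
    linarith

lemma fin_cast_le (hU : 2 ≤ U) (a : Fin (U-1)) : ((a : ℕ) : ℝ) ≤ (U:ℝ) - 2 := by
  have := a.isLt
  have h2 : (a : ℕ) + 2 ≤ U := by omega
  have h3 : ((a:ℕ):ℝ) + 2 ≤ (U:ℝ) := by exact_mod_cast h2
  linarith

lemma abs_regionOff₀ (hU : 2 ≤ U) (ω : List (Alp U V)) (a : Alp U V) :
    |regionCtr ctr ω a 0 - ctr ω 0| ≤ ((U:ℝ) - 2) * rg (U:ℝ) ω.length := by
  have hu := hu2 (U := U) hU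
  have hrg := rg_pos hu ω.length
  have : regionCtr ctr ω a 0 - ctr ω 0 = (2 * (((a.1:ℕ):ℝ) + 1) - U) * rg (U:ℝ) ω.length := by
    unfold regionCtr; simp [Matrix.cons_val_zero]
  rw [this, abs_mul, abs_of_pos hrg]
  apply mul_le_mul_of_nonneg_right _ hrg.le
  rw [abs_le]
  have h1 : (0:ℝ) ≤ ((a.1:ℕ):ℝ) := by positivity
  have h2 := fin_cast_le hU a.1
  constructor <;> linarith

lemma abs_regionOff₁ (hV : 2 ≤ V) (ω : List (Alp U V)) (a : Alp U V) :
    |regionCtr ctr ω a 1 - ctr ω 1| ≤ ((V:ℝ) - 2) * rg (V:ℝ) ω.length := by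
  have hv := hv2 (V := V) hV
  have hrg := rg_pos hv ω.length
  have : regionCtr ctr ω a 1 - ctr ω 1 = (2 * (((a.2:ℕ):ℝ) + 1) - V) * rg (V:ℝ) ω.length := by
    unfold regionCtr; simp [Matrix.cons_val_one]
  rw [this, abs_mul, abs_of_pos hrg]
  apply mul_le_mul_of_nonneg_right _ hrg.le
  rw [abs_le]
  have h1 : (0:ℝ) ≤ ((a.2:ℕ):ℝ) := by positivity
  have h2 := fin_cast_le hV a.2
  constructor <;> linarith

lemma child_off₀ (hU : 2 ≤ U) (hrec : Hrec U V corner ctr) (ω : List (Alp U V)) (a : Alp U V) :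
    |ctr (ω ++ [a]) 0 - ctr ω 0| ≤ ((U:ℝ) - 1) * hw (U:ℝ) (ω.length + 1) := by
  have hu := hu2 (U := U) hU
  have h1 := abs_regionOff₀ (ctr := ctr) hU ω a
  have h2 : |ctr (ω ++ [a]) 0 - regionCtr ctr ω a 0| ≤ rg (U:ℝ) (ω.length + 1) := by
    rw [childCtr₀ hrec ω a]
    have : regionCtr ctr ω a 0 - epsx corner ω a * rg (U:ℝ) (ω.length + 1)
        - regionCtr ctr ω a 0 = -(epsx corner ω a * rg (U:ℝ) (ω.length + 1)) := by ring
    rw [this, abs_neg, abs_mul]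
    rcases epsx_one (corner := corner) (ω := ω) (a := a) with h | h <;>
      rw [h] <;> simp [abs_of_pos (rg_pos hu (ω.length + 1))]
  have key : ((U:ℝ) - 2) * rg (U:ℝ) ω.length + rg (U:ℝ) (ω.length+1)
      = ((U:ℝ) - 1) * hw (U:ℝ) (ω.length + 1) := by
    have e1 := rg_sub hu ω.length
    have e2 := mul_rg hu ω.length
    have e3 := mul_rg hu (ω.length + 1)
    have e4 := hw_sub_hw hu ω.length
    nlinarith [rg_pos hu ω.length, rg_pos hu (ω.length+1)]
  calc |ctr (ω ++ [a]) 0 - ctr ω 0|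
      ≤ |ctr (ω ++ [a]) 0 - regionCtr ctr ω a 0| + |regionCtr ctr ω a 0 - ctr ω 0| := by
        have := abs_sub_abs_le_abs_sub (ctr (ω ++ [a]) 0) (ctr ω 0)
        exact abs_sub_le _ _ _
  _ ≤ ((U:ℝ) - 2) * rg (U:ℝ) ω.length + rg (U:ℝ) (ω.length+1) := by linarith
  _ = _ := key

lemma child_off₁ (hV : 2 ≤ V) (hrec : Hrec U V corner ctr) (ω : List (Alp U V)) (a : Alp U V) :
    |ctr (ω ++ [a]) 1 - ctr ω 1| ≤ ((V:ℝ) - 1) * hw (V:ℝ) (ω.length + 1) := by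
  have hv := hv2 (V := V) hV
  have h1 := abs_regionOff₁ (ctr := ctr) hV ω a
  have h2 : |ctr (ω ++ [a]) 1 - regionCtr ctr ω a 1| ≤ rg (V:ℝ) (ω.length + 1) := by
    rw [childCtr₁ hrec ω a]
    have : regionCtr ctr ω a 1 - epsy corner ω a * rg (V:ℝ) (ω.length + 1)
        - regionCtr ctr ω a 1 = -(epsy corner ω a * rg (V:ℝ) (ω.length + 1)) := by ring
    rw [this, abs_neg, abs_mul]
    rcases epsy_one (corner := corner) (ω := ω) (a := a) with h | h <;>
      rw [h] <;> simp [abs_of_pos (rg_pos hv (ω.length + 1))]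
  have key : ((V:ℝ) - 2) * rg (V:ℝ) ω.length + rg (V:ℝ) (ω.length+1)
      = ((V:ℝ) - 1) * hw (V:ℝ) (ω.length + 1) := by
    have e1 := rg_sub hv ω.length
    have e2 := mul_rg hv ω.length
    have e3 := mul_rg hv (ω.length + 1)
    have e4 := hw_sub_hw hv ω.length
    nlinarith [rg_pos hv ω.length, rg_pos hv (ω.length+1)]
  calc |ctr (ω ++ [a]) 1 - ctr ω 1|
      ≤ |ctr (ω ++ [a]) 1 - regionCtr ctr ω a 1| + |regionCtr ctr ω a 1 - ctr ω 1| :=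
        abs_sub_le _ _ _
  _ ≤ ((V:ℝ) - 2) * rg (V:ℝ) ω.length + rg (V:ℝ) (ω.length+1) := by linarith
  _ = _ := key

end geom2


section sep
variable {corner : List (Alp U V) → Alp U V → Bool × Bool} {ctr : List (Alp U V) → Fin 2 → ℝ}

lemma rect_sep (hU : 2 ≤ U) (hV : 2 ≤ V) (hrec : Hrec U V corner ctr) :
    ∀ (m : ℕ) (ω ω' : List (Alp U V)), ω.length = m → ω'.length = m → ω ≠ ω' →
    2 * hw (U:ℝ) m ≤ |ctr ω 0 - ctr ω' 0| ∨ 2 * hw (V:ℝ) m ≤ |ctr ω 1 - ctr ω' 1| := by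
  have hu := hu2 (U:=U) hU; have hv := hv2 (V:=V) hV
  intro m
  induction m with
  | zero =>
    intro ω ω' h h' hne
    rw [List.length_eq_zero_iff] at h h'
    exact absurd (by rw [h, h']) hne
  | succ m ih =>
    intro ω ω' h h' hne
    obtain ⟨ρ, a, rfl⟩ : ∃ ρ a, ω = ρ ++ [a] := by
      rcases List.eq_nil_or_concat ω with rfl | ⟨ρ, a, hρ⟩
      · simp at h
      · exact ⟨ρ, a, by simpa [List.concat_eq_append] using hρ⟩
    obtain ⟨ρ', a', rfl⟩ : ∃ ρ a, ω' = ρ ++ [a] := by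
      rcases List.eq_nil_or_concat ω' with rfl | ⟨ρ', a', hρ'⟩
      · simp at h'
      · exact ⟨ρ', a', by simpa [List.concat_eq_append] using hρ'⟩
    have hρ : ρ.length = m := by simpa using h
    have hρ' : ρ'.length = m := by simpa using h'
    by_cases hpp : ρ = ρ'
    · subst hpp
      have haa : a ≠ a' := fun hh => hne (by rw [hh])
      by_cases h1 : (a.1:ℕ) = (a'.1:ℕ)
      · -- second coordinates differ
        have h2 : (a.2 : ℕ) ≠ (a'.2 : ℕ) := by
          intro hh
          exact haa (Prod.ext_iff.mpr ⟨Fin.val_injective h1, Fin.val_injective hh⟩)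
        right
        have e := (hrec ρ a).2
        have e' := (hrec ρ a').2
        have hdelta : ctr (ρ ++ [a]) 1 - ctr (ρ ++ [a']) 1
            = (2*((a.2:ℕ):ℝ) - 2*((a'.2:ℕ):ℝ)) * rg (V:ℝ) ρ.length
              + ((if (corner ρ a).2 then (-1:ℝ) else 1) - (if (corner ρ a').2 then (-1:ℝ) else 1))
                * rg (V:ℝ) (ρ.length + 1) := by
          rw [e, e']; simp only [rg, div_eq_mul_inv]; push_cast; ring
        set X := (2*((a.2:ℕ):ℝ) - 2*((a'.2:ℕ):ℝ)) * rg (V:ℝ) ρ.length with hX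
        set Y := ((if (corner ρ a).2 then (-1:ℝ) else 1) - (if (corner ρ a').2 then (-1:ℝ) else 1))
                * rg (V:ℝ) (ρ.length + 1) with hY
        have hrgm := rg_pos hv ρ.length
        have hrgm1 := rg_pos hv (ρ.length + 1)
        have hXb : 2 * rg (V:ℝ) ρ.length ≤ |X| := by
          rw [hX, abs_mul, abs_of_pos hrgm]
          have : (2:ℝ) ≤ |2*((a.2:ℕ):ℝ) - 2*((a'.2:ℕ):ℝ)| := by
            have h3 := nat_cast_sep h2
            have h5 : |2*((a.2:ℕ):ℝ) - 2*((a'.2:ℕ):ℝ)| = 2 * |((a.2:ℕ):ℝ) - ((a'.2:ℕ):ℝ)| := by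
              rw [show 2*((a.2:ℕ):ℝ) - 2*((a'.2:ℕ):ℝ) = 2*(((a.2:ℕ):ℝ) - ((a'.2:ℕ):ℝ)) by ring,
                abs_mul, abs_two]
            linarith
          nlinarith
        have hYb : |Y| ≤ 2 * rg (V:ℝ) (ρ.length + 1) := by
          rw [hY, abs_mul, abs_of_pos hrgm1]
          have : |(if (corner ρ a).2 then (-1:ℝ) else 1) - (if (corner ρ a').2 then (-1:ℝ) else 1)| ≤ 2 := by
            split <;> split <;> norm_num
          nlinarith
        have habs : |X| ≤ |X + Y| + |Y| := by
          have h4 := abs_add_le (X + Y) (-Y)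
          simpa using h4
        have hsub := rg_sub hv ρ.length
        have hlen : (ρ ++ [a]).length = ρ.length + 1 := by simp
        rw [hdelta]
        rw [hlen, hρ] at *
        linarith
      · have h2 : (a.1:ℕ) ≠ (a'.1:ℕ) := h1
        left
        have e := (hrec ρ a).1
        have e' := (hrec ρ a').1
        have hdelta : ctr (ρ ++ [a]) 0 - ctr (ρ ++ [a']) 0
            = (2*((a.1:ℕ):ℝ) - 2*((a'.1:ℕ):ℝ)) * rg (U:ℝ) ρ.length
              + ((if (corner ρ a).1 then (-1:ℝ) else 1) - (if (corner ρ a').1 then (-1:ℝ) else 1))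
                * rg (U:ℝ) (ρ.length + 1) := by
          rw [e, e']; simp only [rg, div_eq_mul_inv]; push_cast; ring
        set X := (2*((a.1:ℕ):ℝ) - 2*((a'.1:ℕ):ℝ)) * rg (U:ℝ) ρ.length with hX
        set Y := ((if (corner ρ a).1 then (-1:ℝ) else 1) - (if (corner ρ a').1 then (-1:ℝ) else 1))
                * rg (U:ℝ) (ρ.length + 1) with hY
        have hrgm := rg_pos hu ρ.length
        have hrgm1 := rg_pos hu (ρ.length + 1)
        have hXb : 2 * rg (U:ℝ) ρ.length ≤ |X| := by
          rw [hX, abs_mul, abs_of_pos hrgm]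
          have : (2:ℝ) ≤ |2*((a.1:ℕ):ℝ) - 2*((a'.1:ℕ):ℝ)| := by
            have h3 := nat_cast_sep h2
            have h5 : |2*((a.1:ℕ):ℝ) - 2*((a'.1:ℕ):ℝ)| = 2 * |((a.1:ℕ):ℝ) - ((a'.1:ℕ):ℝ)| := by
              rw [show 2*((a.1:ℕ):ℝ) - 2*((a'.1:ℕ):ℝ) = 2*(((a.1:ℕ):ℝ) - ((a'.1:ℕ):ℝ)) by ring,
                abs_mul, abs_two]
            linarith
          nlinarith
        have hYb : |Y| ≤ 2 * rg (U:ℝ) (ρ.length + 1) := by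
          rw [hY, abs_mul, abs_of_pos hrgm1]
          have : |(if (corner ρ a).1 then (-1:ℝ) else 1) - (if (corner ρ a').1 then (-1:ℝ) else 1)| ≤ 2 := by
            split <;> split <;> norm_num
          nlinarith
        have habs : |X| ≤ |X + Y| + |Y| := by
          have h4 := abs_add_le (X + Y) (-Y)
          simpa using h4
        have hsub := rg_sub hu ρ.length
        have hlen : (ρ ++ [a]).length = ρ.length + 1 := by simp
        rw [hdelta]
        rw [hlen, hρ] at *
        linarith
    · rcases ih ρ ρ' hρ hρ' hpp with hsep | hsep
      · left
        have t1 := child_off₀ hU hrec ρ a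
        have t1' := child_off₀ hU hrec ρ' a'
        rw [hρ] at t1
        rw [hρ'] at t1'
        have hd := hw_sub_hw hu m
        have tri : |ctr ρ 0 - ctr ρ' 0| ≤ |ctr (ρ ++ [a]) 0 - ctr ρ 0|
            + |ctr (ρ ++ [a]) 0 - ctr (ρ' ++ [a']) 0| + |ctr (ρ' ++ [a']) 0 - ctr ρ' 0| := by
          have u1 : ctr ρ 0 - ctr ρ' 0 = -(ctr (ρ ++ [a]) 0 - ctr ρ 0)
              + (ctr (ρ ++ [a]) 0 - ctr (ρ' ++ [a']) 0) + (ctr (ρ' ++ [a']) 0 - ctr ρ' 0) := by ring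
          rw [u1]
          calc |_ + _ + _| ≤ |(-(ctr (ρ ++ [a]) 0 - ctr ρ 0)
              + (ctr (ρ ++ [a]) 0 - ctr (ρ' ++ [a']) 0))| + |ctr (ρ' ++ [a']) 0 - ctr ρ' 0| :=
                abs_add_le _ _
          _ ≤ |(-(ctr (ρ ++ [a]) 0 - ctr ρ 0))| + |ctr (ρ ++ [a]) 0 - ctr (ρ' ++ [a']) 0|
              + |ctr (ρ' ++ [a']) 0 - ctr ρ' 0| := by
                have := abs_add_le (-(ctr (ρ ++ [a]) 0 - ctr ρ 0)) (ctr (ρ ++ [a]) 0 - ctr (ρ' ++ [a']) 0)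
                linarith
          _ = _ := by rw [abs_neg]
        linarith
      · right
        have t1 := child_off₁ hV hrec ρ a
        have t1' := child_off₁ hV hrec ρ' a'
        rw [hρ] at t1
        rw [hρ'] at t1'
        have hd := hw_sub_hw hv m
        have tri : |ctr ρ 1 - ctr ρ' 1| ≤ |ctr (ρ ++ [a]) 1 - ctr ρ 1|
            + |ctr (ρ ++ [a]) 1 - ctr (ρ' ++ [a']) 1| + |ctr (ρ' ++ [a']) 1 - ctr ρ' 1| := by
          have u1 : ctr ρ 1 - ctr ρ' 1 = -(ctr (ρ ++ [a]) 1 - ctr ρ 1)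
              + (ctr (ρ ++ [a]) 1 - ctr (ρ' ++ [a']) 1) + (ctr (ρ' ++ [a']) 1 - ctr ρ' 1) := by ring
          rw [u1]
          calc |_ + _ + _| ≤ |(-(ctr (ρ ++ [a]) 1 - ctr ρ 1)
              + (ctr (ρ ++ [a]) 1 - ctr (ρ' ++ [a']) 1))| + |ctr (ρ' ++ [a']) 1 - ctr ρ' 1| :=
                abs_add_le _ _
          _ ≤ |(-(ctr (ρ ++ [a]) 1 - ctr ρ 1))| + |ctr (ρ ++ [a]) 1 - ctr (ρ' ++ [a']) 1|
              + |ctr (ρ' ++ [a']) 1 - ctr ρ' 1| := by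
                have := abs_add_le (-(ctr (ρ ++ [a]) 1 - ctr ρ 1)) (ctr (ρ ++ [a]) 1 - ctr (ρ' ++ [a']) 1)
                linarith
          _ = _ := by rw [abs_neg]
        linarith

end sep


section sep2
variable {corner : List (Alp U V) → Alp U V → Bool × Bool} {ctr : List (Alp U V) → Fin 2 → ℝ}

lemma region_sep (hU : 2 ≤ U) (hV : 2 ≤ V) (hrec : Hrec U V corner ctr)
    (m : ℕ) (ω ω' : List (Alp U V)) (a a' : Alp U V)
    (hω : ω.length = m) (hω' : ω'.length = m) (hne : (ω, a) ≠ (ω', a')) :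
    2 * rg (U:ℝ) m ≤ |regionCtr ctr ω a 0 - regionCtr ctr ω' a' 0|
    ∨ 2 * rg (V:ℝ) m ≤ |regionCtr ctr ω a 1 - regionCtr ctr ω' a' 1| := by
  have hu := hu2 (U:=U) hU; have hv := hv2 (V:=V) hV
  by_cases hpp : ω = ω'
  · subst hpp
    have haa : a ≠ a' := fun hh => hne (by rw [hh])
    by_cases h1 : (a.1:ℕ) = (a'.1:ℕ)
    · have h2 : (a.2:ℕ) ≠ (a'.2:ℕ) := by
        intro hh
        exact haa (Prod.ext_iff.mpr ⟨Fin.val_injective h1, Fin.val_injective hh⟩)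
      right
      have hdelta : regionCtr ctr ω a 1 - regionCtr ctr ω a' 1
          = (2*((a.2:ℕ):ℝ) - 2*((a'.2:ℕ):ℝ)) * rg (V:ℝ) ω.length := by
        unfold regionCtr; simp [Matrix.cons_val_one]; ring
      rw [hω] at hdelta
      rw [hdelta, abs_mul, abs_of_pos (rg_pos hv m)]
      have h3 := nat_cast_sep h2
      have h5 : |2*((a.2:ℕ):ℝ) - 2*((a'.2:ℕ):ℝ)| = 2 * |((a.2:ℕ):ℝ) - ((a'.2:ℕ):ℝ)| := by
        rw [show 2*((a.2:ℕ):ℝ) - 2*((a'.2:ℕ):ℝ) = 2*(((a.2:ℕ):ℝ) - ((a'.2:ℕ):ℝ)) by ring,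
          abs_mul, abs_two]
      nlinarith [rg_pos hv m]
    · left
      have hdelta : regionCtr ctr ω a 0 - regionCtr ctr ω a' 0
          = (2*((a.1:ℕ):ℝ) - 2*((a'.1:ℕ):ℝ)) * rg (U:ℝ) ω.length := by
        unfold regionCtr; simp [Matrix.cons_val_zero]; ring
      rw [hω] at hdelta
      rw [hdelta, abs_mul, abs_of_pos (rg_pos hu m)]
      have h3 := nat_cast_sep h1
      have h5 : |2*((a.1:ℕ):ℝ) - 2*((a'.1:ℕ):ℝ)| = 2 * |((a.1:ℕ):ℝ) - ((a'.1:ℕ):ℝ)| := by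
        rw [show 2*((a.1:ℕ):ℝ) - 2*((a'.1:ℕ):ℝ) = 2*(((a.1:ℕ):ℝ) - ((a'.1:ℕ):ℝ)) by ring,
          abs_mul, abs_two]
      nlinarith [rg_pos hu m]
  · rcases rect_sep hU hV hrec m ω ω' hω hω' hpp with hsep | hsep
    · left
      have t1 := abs_regionOff₀ (ctr := ctr) hU ω a
      have t1' := abs_regionOff₀ (ctr := ctr) hU ω' a'
      rw [hω] at t1; rw [hω'] at t1'
      have tri : |ctr ω 0 - ctr ω' 0| ≤ |regionCtr ctr ω a 0 - ctr ω 0|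
          + |regionCtr ctr ω a 0 - regionCtr ctr ω' a' 0| + |regionCtr ctr ω' a' 0 - ctr ω' 0| := by
        have u1 : ctr ω 0 - ctr ω' 0 = -(regionCtr ctr ω a 0 - ctr ω 0)
            + (regionCtr ctr ω a 0 - regionCtr ctr ω' a' 0) + (regionCtr ctr ω' a' 0 - ctr ω' 0) := by
          ring
        rw [u1]
        calc |_ + _ + _| ≤ |(-(regionCtr ctr ω a 0 - ctr ω 0)
            + (regionCtr ctr ω a 0 - regionCtr ctr ω' a' 0))| + |regionCtr ctr ω' a' 0 - ctr ω' 0| :=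
              abs_add_le _ _
        _ ≤ |(-(regionCtr ctr ω a 0 - ctr ω 0))| + |regionCtr ctr ω a 0 - regionCtr ctr ω' a' 0|
            + |regionCtr ctr ω' a' 0 - ctr ω' 0| := by
              have := abs_add_le (-(regionCtr ctr ω a 0 - ctr ω 0))
                (regionCtr ctr ω a 0 - regionCtr ctr ω' a' 0)
              linarith
        _ = _ := by rw [abs_neg]
      have hmr := mul_rg hu m
      linarith
    · right
      have t1 := abs_regionOff₁ (ctr := ctr) hV ω a
      have t1' := abs_regionOff₁ (ctr := ctr) hV ω' a'
      rw [hω] at t1; rw [hω'] at t1'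
      have tri : |ctr ω 1 - ctr ω' 1| ≤ |regionCtr ctr ω a 1 - ctr ω 1|
          + |regionCtr ctr ω a 1 - regionCtr ctr ω' a' 1| + |regionCtr ctr ω' a' 1 - ctr ω' 1| := by
        have u1 : ctr ω 1 - ctr ω' 1 = -(regionCtr ctr ω a 1 - ctr ω 1)
            + (regionCtr ctr ω a 1 - regionCtr ctr ω' a' 1) + (regionCtr ctr ω' a' 1 - ctr ω' 1) := by
          ring
        rw [u1]
        calc |_ + _ + _| ≤ |(-(regionCtr ctr ω a 1 - ctr ω 1)
            + (regionCtr ctr ω a 1 - regionCtr ctr ω' a' 1))| + |regionCtr ctr ω' a' 1 - ctr ω' 1| :=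
              abs_add_le _ _
        _ ≤ |(-(regionCtr ctr ω a 1 - ctr ω 1))| + |regionCtr ctr ω a 1 - regionCtr ctr ω' a' 1|
            + |regionCtr ctr ω' a' 1 - ctr ω' 1| := by
              have := abs_add_le (-(regionCtr ctr ω a 1 - ctr ω 1))
                (regionCtr ctr ω a 1 - regionCtr ctr ω' a' 1)
              linarith
        _ = _ := by rw [abs_neg]
      have hmr := mul_rg hv m
      linarith

/-- 1D region selection within a rectangle -/
lemma region_pick1 {x : ℝ} (hx2 : 2 ≤ x) (n : ℕ) (hn : (n:ℝ) = x - 1) (hn1 : 1 ≤ n)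
    (cc z : ℝ) (m : ℕ) (hz : |z - cc| ≤ hw x m) :
    ∃ k : ℕ, k < n ∧ |z - (cc + (2*(k:ℝ) + 2 - x) * rg x m)| ≤ rg x m := by
  have hmr := mul_rg hx2 m
  obtain ⟨k, hk, hb⟩ := grid1d cc (hw x m) (rg x m) n (rg_pos hx2 m) hn1
    (by rw [hn]; linarith) z hz
  refine ⟨k, hk, ?_⟩
  have e : cc - hw x m + (2*(k:ℝ)+1) * rg x m = cc + (2*(k:ℝ)+2-x) * rg x m := by
    have : hw x m = (x - 1) * rg x m := hmr.symm
    rw [this]; ring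
  rw [← e]; exact hb

end sep2

end

noncomputable section GridSec
open Classical

/-- grid of `n0 × n1` boxes of level `q` covering a rectangle -/
noncomputable def gridF (U V : ℕ) (q : ℝ) (c0 c1 h0 h1 : ℝ) (n0 n1 : ℕ) :
    Finset (ℝ × (Fin 2 → ℝ)) :=
  (Finset.range n0 ×ˢ Finset.range n1).image
    (fun kl => (q, ![c0 - h0 + (2 * (kl.1:ℝ) + 1) * ((U:ℝ)⁻¹ ^ q),
                     c1 - h1 + (2 * (kl.2:ℝ) + 1) * ((V:ℝ)⁻¹ ^ q)]))

lemma gridF_card (U V : ℕ) (q c0 c1 h0 h1 : ℝ) (n0 n1 : ℕ) :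
    (gridF U V q c0 c1 h0 h1 n0 n1).card ≤ n0 * n1 := by
  refine le_trans Finset.card_image_le ?_
  simp

lemma gridF_fst {U V : ℕ} {q c0 c1 h0 h1 : ℝ} {n0 n1 : ℕ} {p : ℝ × (Fin 2 → ℝ)}
    (hp : p ∈ gridF U V q c0 c1 h0 h1 n0 n1) : p.1 = q := by
  obtain ⟨kl, _, rfl⟩ := Finset.mem_image.mp hp
  rfl

lemma AUV_zero (U V : ℕ) : AUV U V 0 = (U:ℝ)⁻¹ := rfl
lemma AUV_one (U V : ℕ) : AUV U V 1 = (V:ℝ)⁻¹ := rfl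

lemma mem_gameBox_iff {U V : ℕ} (s r : ℝ) (y x : Fin 2 → ℝ) :
    x ∈ gameBox (AUV U V) s r y ↔
      (|x 0 - y 0| ≤ (U:ℝ)⁻¹ ^ s * r ∧ |x 1 - y 1| ≤ (V:ℝ)⁻¹ ^ s * r) := by
  constructor
  · intro h; exact ⟨h 0, h 1⟩
  · rintro ⟨h0, h1⟩ j
    fin_cases j
    · exact h0
    · exact h1

lemma gridF_cover {U V : ℕ} (hU : 2 ≤ U) (hV : 2 ≤ V) (q c0 c1 h0 h1 : ℝ) (n0 n1 : ℕ)
    (hn0 : 1 ≤ n0) (hn1 : 1 ≤ n1)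
    (hc0 : h0 ≤ n0 * ((U:ℝ)⁻¹ ^ q)) (hc1 : h1 ≤ n1 * ((V:ℝ)⁻¹ ^ q))
    (x : Fin 2 → ℝ) (hx0 : |x 0 - c0| ≤ h0) (hx1 : |x 1 - c1| ≤ h1) :
    ∃ p ∈ gridF U V q c0 c1 h0 h1 n0 n1, x ∈ gameBox (AUV U V) p.1 1 p.2 := by
  have hu0 : (0:ℝ) < (U:ℝ)⁻¹ := by
    have := hu2 (U:=U) hU; rw [inv_pos]; linarith
  have hv0 : (0:ℝ) < (V:ℝ)⁻¹ := by
    have := hv2 (V:=V) hV; rw [inv_pos]; linarith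
  have hρ0 : (0:ℝ) < (U:ℝ)⁻¹ ^ q := Real.rpow_pos_of_pos hu0 q
  have hρ1 : (0:ℝ) < (V:ℝ)⁻¹ ^ q := Real.rpow_pos_of_pos hv0 q
  obtain ⟨k, hk, hbk⟩ := grid1d c0 h0 _ n0 hρ0 hn0 hc0 (x 0) hx0
  obtain ⟨l, hl, hbl⟩ := grid1d c1 h1 _ n1 hρ1 hn1 hc1 (x 1) hx1
  refine ⟨(q, ![c0 - h0 + (2 * (k:ℝ) + 1) * ((U:ℝ)⁻¹ ^ q),
               c1 - h1 + (2 * (l:ℝ) + 1) * ((V:ℝ)⁻¹ ^ q)]), ?_, ?_⟩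
  · exact Finset.mem_image.mpr ⟨(k, l), Finset.mem_product.mpr
      ⟨Finset.mem_range.mpr hk, Finset.mem_range.mpr hl⟩, rfl⟩
  · rw [mem_gameBox_iff]
    constructor
    · simpa [mul_one] using hbk
    · simpa [mul_one] using hbl

end GridSec

noncomputable section Counts
open Real

/-- `⌈x^s/(x-1)⌉` as a natural number -/
def cdiv (x : ℝ) (s : ℝ) : ℕ := (⌈x ^ s / (x - 1)⌉).toNat
/-- `⌈x^s⌉` as a natural number -/
def cpow (x : ℝ) (s : ℝ) : ℕ := (⌈x ^ s⌉).toNat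

variable {x : ℝ} {s : ℝ}

lemma rpow_pos2 (hx : 2 ≤ x) (s : ℝ) : 0 < x ^ s := Real.rpow_pos_of_pos (by linarith) s

lemma cdiv_pos (hx : 2 ≤ x) (s : ℝ) : 1 ≤ cdiv x s := by
  have h1 : 0 < x ^ s / (x - 1) := by
    have := rpow_pos2 hx s; have : (0:ℝ) < x - 1 := by linarith
    positivity
  have := ceil_ge_one h1
  unfold cdiv; omega

lemma cpow_pos (hx : 2 ≤ x) (s : ℝ) : 1 ≤ cpow x s := by
  have := ceil_ge_one (rpow_pos2 hx s)
  unfold cpow; omega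

lemma cdiv_cast (hx : 2 ≤ x) (s : ℝ) : ((cdiv x s : ℕ) : ℝ) = (⌈x ^ s / (x - 1)⌉ : ℝ) := by
  have h1 : 0 < x ^ s / (x - 1) := by
    have := rpow_pos2 hx s; have : (0:ℝ) < x - 1 := by linarith
    positivity
  have h2 := ceil_ge_one h1
  unfold cdiv
  have h3 : ((⌈x ^ s / (x - 1)⌉.toNat : ℕ) : ℤ) = ⌈x ^ s / (x - 1)⌉ := Int.toNat_of_nonneg (by omega)
  exact_mod_cast congrArg (fun z : ℤ => (z:ℝ)) h3

lemma cpow_cast (hx : 2 ≤ x) (s : ℝ) : ((cpow x s : ℕ) : ℝ) = (⌈x ^ s⌉ : ℝ) := by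
  have h2 := ceil_ge_one (rpow_pos2 hx s)
  unfold cpow
  have h3 : ((⌈x ^ s⌉.toNat : ℕ) : ℤ) = ⌈x ^ s⌉ := Int.toNat_of_nonneg (by omega)
  exact_mod_cast congrArg (fun z : ℤ => (z:ℝ)) h3

lemma cdiv_ge (hx : 2 ≤ x) (s : ℝ) : x ^ s / (x - 1) ≤ (cdiv x s : ℝ) := by
  rw [cdiv_cast hx s]; exact Int.le_ceil _

lemma cpow_ge (hx : 2 ≤ x) (s : ℝ) : x ^ s ≤ (cpow x s : ℝ) := by
  rw [cpow_cast hx s]; exact Int.le_ceil _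

/-- box radius at level `m+1+t` in terms of `hw` -/
lemma rxq_eq (hx : 2 ≤ x) (m : ℕ) (t : ℝ) :
    x⁻¹ ^ ((m:ℝ) + 1 + t) = hw x (m+1) * (x ^ t)⁻¹ := by
  have hx0 : (0:ℝ) < x := by linarith
  rw [Real.inv_rpow hx0.le, show (m:ℝ) + 1 + t = ((m+1 : ℕ):ℝ) + t by push_cast; ring,
    Real.rpow_add hx0, mul_inv, Real.rpow_natCast]
  rfl

lemma count_rg_succ (hx : 2 ≤ x) (m : ℕ) (t : ℝ) :
    rg x (m+1) ≤ (cdiv x t : ℝ) * (x⁻¹ ^ ((m:ℝ) + 1 + t)) := by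
  have hx0 : (0:ℝ) < x := by linarith
  have hpt := rpow_pos2 hx t
  rw [rxq_eq hx m t]
  have h1 := cdiv_ge hx t
  have h2 := mul_rg hx (m+1)
  have h3 := rg_pos hx (m+1)
  have h4 := hw_pos hx (m+1)
  rw [div_le_iff₀ (by linarith : (0:ℝ) < x - 1)] at h1
  rw [← mul_rg hx (m+1)]
  calc rg x (m+1) = x ^ t * rg x (m+1) * (x ^ t)⁻¹ := by field_simp
  _ ≤ (cdiv x t : ℝ) * (x - 1) * rg x (m+1) * (x ^ t)⁻¹ := by
      apply mul_le_mul_of_nonneg_right _ (inv_pos.mpr hpt).le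
      exact mul_le_mul_of_nonneg_right h1 h3.le
  _ = _ := by ring

lemma count_rg_base (hx : 2 ≤ x) (m : ℕ) (t : ℝ) :
    rg x m ≤ (cdiv x (t+1) : ℝ) * (x⁻¹ ^ ((m:ℝ) + 1 + t)) := by
  have hx0 : (0:ℝ) < x := by linarith
  have hpt := rpow_pos2 hx t
  have hpt1 := rpow_pos2 hx (t+1)
  rw [rxq_eq hx m t]
  have h1 := cdiv_ge hx (t+1)
  rw [div_le_iff₀ (by linarith : (0:ℝ) < x - 1)] at h1
  have h2 := rg_pos hx m
  have h3 := hw_pos hx (m+1)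
  have hsucc : hw x (m+1) = hw x m / x := hw_succ hx m
  have hrgeq : rg x m = hw x m / (x - 1) := rg_eq hx m
  have hxt1 : x ^ (t+1) = x ^ t * x := by
    rw [Real.rpow_add hx0, Real.rpow_one]
  -- goal: hw m/(x-1) ≤ cdiv * (hw m / x * (x^t)⁻¹)
  rw [hrgeq, hsucc]
  rw [div_le_iff₀ (by linarith : (0:ℝ) < x - 1)]
  have hwpos := hw_pos hx m
  have key : (cdiv x (t+1) : ℝ) * (hw x m / x * (x ^ t)⁻¹) * (x - 1)
      = ((cdiv x (t+1):ℝ) * (x-1)) * hw x m * (x ^ t * x)⁻¹ := by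
    field_simp
  rw [key, ← hxt1]
  have : x ^ (t+1) ≤ (cdiv x (t+1):ℝ) * (x-1) := h1
  have hinv : (0:ℝ) < (x ^ (t+1))⁻¹ := inv_pos.mpr hpt1
  have : x ^ (t+1) * hw x m * (x ^ (t+1))⁻¹ ≤ ((cdiv x (t+1):ℝ) * (x-1)) * hw x m * (x ^ (t+1))⁻¹ := by
    apply mul_le_mul_of_nonneg_right _ hinv.le
    exact mul_le_mul_of_nonneg_right this hwpos.le
  calc hw x m = x ^ (t+1) * hw x m * (x ^ (t+1))⁻¹ := by field_simp
  _ ≤ _ := this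

lemma count_hw_succ (hx : 2 ≤ x) (m : ℕ) (t : ℝ) :
    hw x (m+1) ≤ (cpow x t : ℝ) * (x⁻¹ ^ ((m:ℝ) + 1 + t)) := by
  have hx0 : (0:ℝ) < x := by linarith
  have hpt := rpow_pos2 hx t
  rw [rxq_eq hx m t]
  have h1 := cpow_ge hx t
  have h3 := hw_pos hx (m+1)
  calc hw x (m+1) = x ^ t * (hw x (m+1) * (x ^ t)⁻¹) := by field_simp
  _ ≤ (cpow x t : ℝ) * (hw x (m+1) * (x ^ t)⁻¹) := by
      apply mul_le_mul_of_nonneg_right h1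
      positivity

end Counts

noncomputable section Strat
open Classical

variable {U V : ℕ}
variable {corner : List (Alp U V) → Alp U V → Bool × Bool} {ctr : List (Alp U V) → Fin 2 → ℝ}

/-- the two covering counts -/
def b1N (U V : ℕ) (t : ℝ) : ℕ := cdiv (U:ℝ) t * cdiv (V:ℝ) (t+1) + cpow (U:ℝ) t * cdiv (V:ℝ) t
def b2N (U V : ℕ) (t : ℝ) : ℕ := cdiv (U:ℝ) (t+1) * cdiv (V:ℝ) t + cdiv (U:ℝ) t * cpow (V:ℝ) t
def NtN (U V : ℕ) (t : ℝ) : ℕ := min (b1N U V t) (b2N U V t)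

/-- cover of (region ∖ child) for the region of `(ω, a)` at level `m`, with boxes of
level `m+1+t` -/
def regionCover (corner : List (Alp U V) → Alp U V → Bool × Bool)
    (ctr : List (Alp U V) → Fin 2 → ℝ) (t : ℝ) (m : ℕ)
    (ω : List (Alp U V)) (a : Alp U V) : Finset (ℝ × (Fin 2 → ℝ)) :=
  if b1N U V t ≤ b2N U V t then
    gridF U V ((m:ℝ) + 1 + t)
      (regionCtr ctr ω a 0 + epsx corner ω a * hw (U:ℝ) (m+1)) (regionCtr ctr ω a 1)
      (rg (U:ℝ) (m+1)) (rg (V:ℝ) m) (cdiv (U:ℝ) t) (cdiv (V:ℝ) (t+1))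
    ∪ gridF U V ((m:ℝ) + 1 + t)
      (regionCtr ctr ω a 0 - epsx corner ω a * rg (U:ℝ) (m+1))
      (regionCtr ctr ω a 1 + epsy corner ω a * hw (V:ℝ) (m+1))
      (hw (U:ℝ) (m+1)) (rg (V:ℝ) (m+1)) (cpow (U:ℝ) t) (cdiv (V:ℝ) t)
  else
    gridF U V ((m:ℝ) + 1 + t)
      (regionCtr ctr ω a 0) (regionCtr ctr ω a 1 + epsy corner ω a * hw (V:ℝ) (m+1))
      (rg (U:ℝ) m) (rg (V:ℝ) (m+1)) (cdiv (U:ℝ) (t+1)) (cdiv (V:ℝ) t)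
    ∪ gridF U V ((m:ℝ) + 1 + t)
      (regionCtr ctr ω a 0 + epsx corner ω a * hw (U:ℝ) (m+1))
      (regionCtr ctr ω a 1 - epsy corner ω a * rg (V:ℝ) (m+1))
      (rg (U:ℝ) (m+1)) (hw (V:ℝ) (m+1)) (cdiv (U:ℝ) t) (cpow (V:ℝ) t)

lemma regionCover_card (t : ℝ) (m : ℕ) (ω : List (Alp U V)) (a : Alp U V) :
    (regionCover corner ctr t m ω a).card ≤ NtN U V t := by
  unfold regionCover
  split_ifs with h
  · refine le_trans (Finset.card_union_le _ _) ?_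
    refine le_trans (Nat.add_le_add (gridF_card _ _ _ _ _ _ _ _ _) (gridF_card _ _ _ _ _ _ _ _ _)) ?_
    have h2 : NtN U V t = b1N U V t := Nat.min_eq_left h
    rw [h2, b1N]
  · refine le_trans (Finset.card_union_le _ _) ?_
    refine le_trans (Nat.add_le_add (gridF_card _ _ _ _ _ _ _ _ _) (gridF_card _ _ _ _ _ _ _ _ _)) ?_
    have h2 : NtN U V t = b2N U V t := Nat.min_eq_right (by omega)
    rw [h2, b2N]

lemma regionCover_fst {t : ℝ} {m : ℕ} {ω : List (Alp U V)} {a : Alp U V} {p}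
    (hp : p ∈ regionCover corner ctr t m ω a) : p.1 = (m:ℝ) + 1 + t := by
  unfold regionCover at hp
  split_ifs at hp <;> rcases Finset.mem_union.mp hp with h | h <;> exact gridF_fst h

/-- the cover really covers region ∖ child -/
lemma regionCover_covers (hU : 2 ≤ U) (hV : 2 ≤ V) (hrec : Hrec U V corner ctr)
    (t : ℝ) (ht : 0 < t) (m : ℕ) (ω : List (Alp U V)) (a : Alp U V) (hlen : ω.length = m)
    (x : Fin 2 → ℝ)
    (hx0 : |x 0 - regionCtr ctr ω a 0| ≤ rg (U:ℝ) m)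
    (hx1 : |x 1 - regionCtr ctr ω a 1| ≤ rg (V:ℝ) m)
    (hnc : ¬ (|x 0 - ctr (ω ++ [a]) 0| ≤ hw (U:ℝ) (m+1)
              ∧ |x 1 - ctr (ω ++ [a]) 1| ≤ hw (V:ℝ) (m+1))) :
    ∃ p ∈ regionCover corner ctr t m ω a, x ∈ gameBox (AUV U V) p.1 1 p.2 := by
  have hu := hu2 (U:=U) hU; have hv := hv2 (V:=V) hV
  have hcc0 : ctr (ω ++ [a]) 0 = regionCtr ctr ω a 0 - epsx corner ω a * rg (U:ℝ) (m+1) := by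
    have := childCtr₀ hrec ω a; rwa [hlen] at this
  have hcc1 : ctr (ω ++ [a]) 1 = regionCtr ctr ω a 1 - epsy corner ω a * rg (V:ℝ) (m+1) := by
    have := childCtr₁ hrec ω a; rwa [hlen] at this
  have hsubU := rg_sub hu m
  have hsubV := rg_sub hv m
  have hwuP := hw_pos hu (m+1)
  have hwvP := hw_pos hv (m+1)
  have hrguP := rg_pos hu (m+1)
  have hrgvP := rg_pos hv (m+1)
  have hwleU := hw_succ_le_rg hu m
  have hwleV := hw_succ_le_rg hv m
  set G0 := regionCtr ctr ω a 0
  set G1 := regionCtr ctr ω a 1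
  set ex := epsx corner ω a with hex
  set ey := epsy corner ω a with hey
  have hex1 : ex = 1 ∨ ex = -1 := epsx_one
  have hey1 : ey = 1 ∨ ey = -1 := epsy_one
  unfold regionCover
  split_ifs with hbr
  · by_cases hSX : |x 0 - (G0 + ex * hw (U:ℝ) (m+1))| ≤ rg (U:ℝ) (m+1)
    · obtain ⟨p, hp, hg⟩ := gridF_cover hU hV ((m:ℝ)+1+t) (G0 + ex * hw (U:ℝ) (m+1)) G1
        (rg (U:ℝ) (m+1)) (rg (V:ℝ) m) (cdiv (U:ℝ) t) (cdiv (V:ℝ) (t+1))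
        (cdiv_pos hu t) (cdiv_pos hv (t+1))
        (count_rg_succ hu m t) (count_rg_base hv m t) x hSX hx1
      exact ⟨p, Finset.mem_union_left _ hp, hg⟩
    · have hchx : |x 0 - ctr (ω ++ [a]) 0| ≤ hw (U:ℝ) (m+1) := by
        rw [hcc0]
        have := cornerSplit G0 (rg (U:ℝ) m) (hw (U:ℝ) (m+1)) (x 0) ex hex1 hwuP hwleU hx0
          (by rw [hsubU]; exact hSX)
        rwa [hsubU] at this
      have hncy : ¬ |x 1 - ctr (ω ++ [a]) 1| ≤ hw (V:ℝ) (m+1) := fun hy => hnc ⟨hchx, hy⟩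
      have hstry : |x 1 - (G1 + ey * hw (V:ℝ) (m+1))| ≤ rg (V:ℝ) (m+1) := by
        have hb : -ey = 1 ∨ -ey = -1 := by rcases hey1 with h | h <;> rw [h] <;> simp
        have hle : rg (V:ℝ) (m+1) ≤ rg (V:ℝ) m := by linarith
        have := cornerSplit G1 (rg (V:ℝ) m) (rg (V:ℝ) (m+1)) (x 1) (-ey) hb hrgvP hle hx1
          (by
            intro hcon
            apply hncy
            rw [hcc1]
            have e : G1 + -ey * rg (V:ℝ) (m+1) = G1 - ey * rg (V:ℝ) (m+1) := by ring
            rw [e] at hcon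
            calc |x 1 - (G1 - ey * rg (V:ℝ) (m+1))| ≤ rg (V:ℝ) m - rg (V:ℝ) (m+1) := hcon
            _ = hw (V:ℝ) (m+1) := by linarith)
        have e : G1 - -ey * (rg (V:ℝ) m - rg (V:ℝ) (m+1)) = G1 + ey * (rg (V:ℝ) m - rg (V:ℝ) (m+1)) := by
          ring
        rw [e] at this
        have e2 : rg (V:ℝ) m - rg (V:ℝ) (m+1) = hw (V:ℝ) (m+1) := by linarith
        rwa [e2] at this
      have hchx' : |x 0 - (G0 - ex * rg (U:ℝ) (m+1))| ≤ hw (U:ℝ) (m+1) := by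
        rw [hcc0] at hchx; exact hchx
      obtain ⟨p, hp, hg⟩ := gridF_cover hU hV ((m:ℝ)+1+t) (G0 - ex * rg (U:ℝ) (m+1))
        (G1 + ey * hw (V:ℝ) (m+1)) (hw (U:ℝ) (m+1)) (rg (V:ℝ) (m+1))
        (cpow (U:ℝ) t) (cdiv (V:ℝ) t) (cpow_pos hu t) (cdiv_pos hv t)
        (count_hw_succ hu m t) (count_rg_succ hv m t) x hchx' hstry
      exact ⟨p, Finset.mem_union_right _ hp, hg⟩
  · by_cases hSY : |x 1 - (G1 + ey * hw (V:ℝ) (m+1))| ≤ rg (V:ℝ) (m+1)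
    · obtain ⟨p, hp, hg⟩ := gridF_cover hU hV ((m:ℝ)+1+t) G0 (G1 + ey * hw (V:ℝ) (m+1))
        (rg (U:ℝ) m) (rg (V:ℝ) (m+1)) (cdiv (U:ℝ) (t+1)) (cdiv (V:ℝ) t)
        (cdiv_pos hu (t+1)) (cdiv_pos hv t)
        (count_rg_base hu m t) (count_rg_succ hv m t) x hx0 hSY
      exact ⟨p, Finset.mem_union_left _ hp, hg⟩
    · have hchy : |x 1 - ctr (ω ++ [a]) 1| ≤ hw (V:ℝ) (m+1) := by
        rw [hcc1]
        have := cornerSplit G1 (rg (V:ℝ) m) (hw (V:ℝ) (m+1)) (x 1) ey hey1 hwvP hwleV hx1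
          (by rw [hsubV]; exact hSY)
        rwa [hsubV] at this
      have hncx : ¬ |x 0 - ctr (ω ++ [a]) 0| ≤ hw (U:ℝ) (m+1) := fun hx => hnc ⟨hx, hchy⟩
      have hstrx : |x 0 - (G0 + ex * hw (U:ℝ) (m+1))| ≤ rg (U:ℝ) (m+1) := by
        have hb : -ex = 1 ∨ -ex = -1 := by rcases hex1 with h | h <;> rw [h] <;> simp
        have hle : rg (U:ℝ) (m+1) ≤ rg (U:ℝ) m := by linarith
        have := cornerSplit G0 (rg (U:ℝ) m) (rg (U:ℝ) (m+1)) (x 0) (-ex) hb hrguP hle hx0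
          (by
            intro hcon
            apply hncx
            rw [hcc0]
            have e : G0 + -ex * rg (U:ℝ) (m+1) = G0 - ex * rg (U:ℝ) (m+1) := by ring
            rw [e] at hcon
            calc |x 0 - (G0 - ex * rg (U:ℝ) (m+1))| ≤ rg (U:ℝ) m - rg (U:ℝ) (m+1) := hcon
            _ = hw (U:ℝ) (m+1) := by linarith)
        have e : G0 - -ex * (rg (U:ℝ) m - rg (U:ℝ) (m+1)) = G0 + ex * (rg (U:ℝ) m - rg (U:ℝ) (m+1)) := by
          ring
        rw [e] at this
        have e2 : rg (U:ℝ) m - rg (U:ℝ) (m+1) = hw (U:ℝ) (m+1) := by linarith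
        rwa [e2] at this
      have hchy' : |x 1 - (G1 - ey * rg (V:ℝ) (m+1))| ≤ hw (V:ℝ) (m+1) := by
        rw [hcc1] at hchy; exact hchy
      obtain ⟨p, hp, hg⟩ := gridF_cover hU hV ((m:ℝ)+1+t) (G0 + ex * hw (U:ℝ) (m+1))
        (G1 - ey * rg (V:ℝ) (m+1)) (rg (U:ℝ) (m+1)) (hw (V:ℝ) (m+1))
        (cdiv (U:ℝ) t) (cpow (V:ℝ) t) (cdiv_pos hu t) (cpow_pos hv t)
        (count_rg_succ hu m t) (count_hw_succ hv m t) x hstrx hchy'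
      exact ⟨p, Finset.mem_union_right _ hp, hg⟩

end Strat

noncomputable section Sel
open Classical

variable {U V : ℕ}
variable {corner : List (Alp U V) → Alp U V → Bool × Bool} {ctr : List (Alp U V) → Fin 2 → ℝ}

lemma hw_succ_lt_rg {x : ℝ} (hx : 2 ≤ x) (m : ℕ) : hw x (m+1) < rg x m := by
  have h1 : (0:ℝ) < x := by linarith
  have h2 : (0:ℝ) < x - 1 := by linarith
  have hp := xpow_pos hx m
  rw [hw, rg, pow_succ]
  rw [inv_lt_inv₀ (by positivity) (by positivity)]
  nlinarith

/-- selection predicate : the region of `(ω,a)` at level `m` is near the window center `w` -/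
def selP (ctr : List (Alp U V) → Fin 2 → ℝ) (m : ℕ) (w : Fin 2 → ℝ)
    (p : List (Alp U V) × Alp U V) : Prop :=
  p.1.length = m
  ∧ |regionCtr ctr p.1 p.2 0 - w 0| ≤ hw (U:ℝ) (m+1) + rg (U:ℝ) m
  ∧ |regionCtr ctr p.1 p.2 1 - w 1| ≤ hw (V:ℝ) (m+1) + rg (V:ℝ) m

lemma selP_finite (m : ℕ) (w : Fin 2 → ℝ) : {p | selP ctr m w p}.Finite := by
  apply Set.Finite.subset (Set.Finite.prod (List.finite_length_eq (Alp U V) m)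
    (Set.finite_univ (α := Alp U V)))
  intro p hp
  exact ⟨hp.1, trivial⟩

def SelFin (ctr : List (Alp U V) → Fin 2 → ℝ) (m : ℕ) (w : Fin 2 → ℝ) :
    Finset (List (Alp U V) × Alp U V) :=
  (selP_finite (ctr := ctr) m w).toFinset

lemma mem_SelFin {m : ℕ} {w : Fin 2 → ℝ} {p : List (Alp U V) × Alp U V} :
    p ∈ SelFin ctr m w ↔ selP ctr m w p := Set.Finite.mem_toFinset _

lemma SelFin_card (hU : 2 ≤ U) (hV : 2 ≤ V) (hrec : Hrec U V corner ctr)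
    (m : ℕ) (w : Fin 2 → ℝ) : (SelFin ctr m w).card ≤ 4 := by
  have hu := hu2 (U:=U) hU; have hv := hv2 (V:=V) hV
  have hcard : (4:ℕ) = Fintype.card (Bool × Bool) := by simp
  rw [hcard, ← Finset.card_univ]
  apply Finset.card_le_card_of_injOn
    (fun p => ((if w 0 < regionCtr ctr p.1 p.2 0 then true else false),
               (if w 1 < regionCtr ctr p.1 p.2 1 then true else false)))
    (fun _ _ => Finset.mem_univ _)
  intro p hp p' hp' heq
  rw [Finset.mem_coe, mem_SelFin] at hp hp'
  by_contra hne
  have hsep := region_sep hU hV hrec m p.1 p'.1 p.2 p'.2 hp.1 hp'.1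
    (by
      intro hcon
      apply hne
      calc p = (p.1, p.2) := rfl
      _ = (p'.1, p'.2) := hcon
      _ = p' := rfl)
  have hb0 := congrArg Prod.fst heq
  have hb1 := congrArg Prod.snd heq
  simp only at hb0 hb1
  have hltU := hw_succ_lt_rg hu m
  have hltV := hw_succ_lt_rg hv m
  rcases hsep with hs | hs
  · have hd : |regionCtr ctr p.1 p.2 0 - regionCtr ctr p'.1 p'.2 0|
        ≤ hw (U:ℝ) (m+1) + rg (U:ℝ) m := by
      have h1 := hp.2.1
      have h2 := hp'.2.1
      rw [abs_le] at h1 h2 ⊢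
      by_cases hlt : w 0 < regionCtr ctr p.1 p.2 0
      · have hlt' : w 0 < regionCtr ctr p'.1 p'.2 0 := by
          by_contra hcon
          rw [if_pos hlt, if_neg hcon] at hb0
          simp at hb0
        constructor <;> nlinarith [h1.1, h1.2, h2.1, h2.2]
      · have hlt' : ¬ w 0 < regionCtr ctr p'.1 p'.2 0 := by
          by_contra hcon
          rw [if_neg hlt, if_pos hcon] at hb0
          simp at hb0
        push_neg at hlt hlt'
        constructor <;> nlinarith [h1.1, h1.2, h2.1, h2.2]
    linarith
  · have hd : |regionCtr ctr p.1 p.2 1 - regionCtr ctr p'.1 p'.2 1|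
        ≤ hw (V:ℝ) (m+1) + rg (V:ℝ) m := by
      have h1 := hp.2.2
      have h2 := hp'.2.2
      rw [abs_le] at h1 h2 ⊢
      by_cases hlt : w 1 < regionCtr ctr p.1 p.2 1
      · have hlt' : w 1 < regionCtr ctr p'.1 p'.2 1 := by
          by_contra hcon
          rw [if_pos hlt, if_neg hcon] at hb1
          simp at hb1
        constructor <;> nlinarith [h1.1, h1.2, h2.1, h2.2]
      · have hlt' : ¬ w 1 < regionCtr ctr p'.1 p'.2 1 := by
          by_contra hcon
          rw [if_neg hlt, if_pos hcon] at hb1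
          simp at hb1
        push_neg at hlt hlt'
        constructor <;> nlinarith [h1.1, h1.2, h2.1, h2.2]
    linarith

/-- the full deletion Finset of turn `m` in branch B -/
def BFin (corner : List (Alp U V) → Alp U V → Bool × Bool)
    (ctr : List (Alp U V) → Fin 2 → ℝ) (t : ℝ) (m : ℕ) (w : Fin 2 → ℝ) :
    Finset (ℝ × (Fin 2 → ℝ)) :=
  (SelFin ctr m w).biUnion (fun p => regionCover corner ctr t m p.1 p.2)

lemma BFin_card (hU : 2 ≤ U) (hV : 2 ≤ V) (hrec : Hrec U V corner ctr)
    (t : ℝ) (m : ℕ) (w : Fin 2 → ℝ) :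
    (BFin corner ctr t m w).card ≤ 4 * NtN U V t := by
  refine le_trans (Finset.card_biUnion_le) ?_
  calc ∑ p ∈ SelFin ctr m w, (regionCover corner ctr t m p.1 p.2).card
      ≤ ∑ _p ∈ SelFin ctr m w, NtN U V t :=
        Finset.sum_le_sum (fun p _ => regionCover_card t m p.1 p.2)
  _ = (SelFin ctr m w).card * NtN U V t := by rw [Finset.sum_const, smul_eq_mul]
  _ ≤ 4 * NtN U V t := Nat.mul_le_mul_right _ (SelFin_card hU hV hrec m w)

lemma BFin_fst {t : ℝ} {m : ℕ} {w : Fin 2 → ℝ} {p}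
    (hp : p ∈ BFin corner ctr t m w) : p.1 = (m:ℝ) + 1 + t := by
  obtain ⟨q, _, hq⟩ := Finset.mem_biUnion.mp hp
  exact regionCover_fst hq

end Sel

noncomputable section Budget
open Real

lemma prod_AUV (U V : ℕ) (hU : 2 ≤ U) (hV : 2 ≤ V) (s : ℝ) :
    (∏ j, AUV U V j ^ s) = ((U:ℝ) * V) ^ (-s) := by
  have hu := hu2 (U:=U) hU; have hv := hv2 (V:=V) hV
  have hu0 : (0:ℝ) < U := by linarith
  have hv0 : (0:ℝ) < V := by linarith
  rw [Fin.prod_univ_two, AUV_zero, AUV_one,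
    ← Real.mul_rpow (by positivity) (by positivity), ← mul_inv,
    Real.inv_rpow (by positivity), ← Real.rpow_neg (by positivity)]

lemma budget_real (U V : ℕ) (hU : 2 ≤ U) (hV : 2 ≤ V) (c t : ℝ)
    (hc0 : 0 < c) (Nt : ℝ) (hNt0 : 0 < Nt) (n m : ℕ)
    (hn : (n:ℝ) * ((U:ℝ) * V) ^ c ≤ 9 * ((U:ℝ) - 1) * ((V:ℝ) - 1) * Nt) :
    (n:ℝ) * (∏ j, AUV U V j ^ ((m:ℝ) + 1 + t)) ^ c
      ≤ ((9 * ((U:ℝ) - 1) * ((V:ℝ) - 1) * Nt) ^ (1/c) * ((U:ℝ) * V) ^ (-(1+t))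
         * ∏ j, AUV U V j ^ ((m:ℝ) + 1)) ^ c := by
  have hu := hu2 (U:=U) hU; have hv := hv2 (V:=V) hV
  set w : ℝ := (U:ℝ) * V with hwdef
  have hw1 : (1:ℝ) < w := by nlinarith
  have hw0 : (0:ℝ) < w := by linarith
  set K : ℝ := 9 * ((U:ℝ) - 1) * ((V:ℝ) - 1) * Nt with hKdef
  have hK0 : 0 < K := by
    have : (0:ℝ) < (U:ℝ) - 1 := by linarith
    have : (0:ℝ) < (V:ℝ) - 1 := by linarith
    rw [hKdef]; positivity
  rw [prod_AUV U V hU hV, prod_AUV U V hU hV]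
  have hKc : (K ^ (1/c)) ^ c = K := by
    rw [← Real.rpow_mul hK0.le, one_div, inv_mul_cancel₀ (ne_of_gt hc0), Real.rpow_one]
  have e : ∀ a : ℝ, (w ^ a) ^ c = w ^ (a * c) := fun a => (Real.rpow_mul hw0.le a c).symm
  have hRHS : (K ^ (1/c) * w ^ (-(1+t)) * w ^ (-((m:ℝ) + 1))) ^ c
      = K * (w ^ (-((m:ℝ) + 1 + t)) ) ^ c * (w ^ (-(1:ℝ))) ^ c := by
    rw [mul_assoc, ← Real.rpow_add hw0]
    rw [Real.mul_rpow (Real.rpow_nonneg hK0.le _) (Real.rpow_nonneg hw0.le _)]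
    rw [hKc, e, e, e]
    rw [show K * w ^ (-((m:ℝ) + 1 + t) * c) * w ^ (-1 * c)
        = K * (w ^ (-((m:ℝ) + 1 + t) * c) * w ^ (-1 * c)) from by ring,
      ← Real.rpow_add hw0]
    congr 2
    ring
  rw [hRHS]
  have hpos1 : (0:ℝ) < (w ^ (-((m:ℝ) + 1 + t))) ^ c :=
    Real.rpow_pos_of_pos (Real.rpow_pos_of_pos hw0 _) c
  have hwc : (w ^ (-(1:ℝ))) ^ c = (w ^ c)⁻¹ := by
    rw [e, ← Real.rpow_neg hw0.le]
    congr 1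
    ring
  rw [hwc]
  have hwcpos : (0:ℝ) < w ^ c := Real.rpow_pos_of_pos hw0 c
  have key : (n:ℝ) ≤ K * (w ^ c)⁻¹ := by
    rw [le_mul_inv_iff₀ hwcpos]
    exact hn
  calc (n:ℝ) * (w ^ (-((m:ℝ) + 1 + t))) ^ c
      ≤ (K * (w ^ c)⁻¹) * (w ^ (-((m:ℝ) + 1 + t))) ^ c :=
        mul_le_mul_of_nonneg_right key hpos1.le
  _ = K * (w ^ (-((m:ℝ) + 1 + t))) ^ c * (w ^ c)⁻¹ := by ring

lemma legal_empty (β : Fin 2 → ℝ) (α c : ℝ) (m : ℕ) (hc0 : 0 < c) :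
    LegalMove β α c m ∅ := by
  refine ⟨Set.countable_empty, by simp, ?_⟩
  rw [if_pos hc0]
  have : ∑' p : (∅ : Set (ℝ × (Fin 2 → ℝ))), ENNReal.ofReal ((∏ j, β j ^ p.1.1) ^ c) = 0 :=
    tsum_empty
  rw [this]
  exact zero_le

lemma legal_of_fin (U V : ℕ) (hU : 2 ≤ U) (hV : 2 ≤ V) (c t : ℝ)
    (hc0 : 0 < c) (ht : 0 < t) (Nt : ℝ) (hNt0 : 0 < Nt) (m : ℕ)
    (M : Finset (ℝ × (Fin 2 → ℝ)))
    (hfst : ∀ p ∈ M, p.1 = (m:ℝ) + 1 + t)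
    (hcard : (M.card : ℝ) * ((U:ℝ) * V) ^ c ≤ 9 * ((U:ℝ) - 1) * ((V:ℝ) - 1) * Nt) :
    LegalMove (AUV U V)
      ((9 * ((U:ℝ) - 1) * ((V:ℝ) - 1) * Nt) ^ (1/c) * ((U:ℝ) * V) ^ (-(1+t))) c m ↑M := by
  refine ⟨M.countable_toSet, ?_, ?_⟩
  · intro p hp
    rw [hfst p hp]
    have h1 : (0:ℝ) ≤ (m:ℝ) := by positivity
    linarith
  · rw [if_pos hc0]
    rw [Finset.tsum_subtype' M (fun p => ENNReal.ofReal ((∏ j, AUV U V j ^ p.1) ^ c))]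
    have hterm : ∀ p ∈ M, ENNReal.ofReal ((∏ j, AUV U V j ^ p.1) ^ c)
        = ENNReal.ofReal ((∏ j, AUV U V j ^ ((m:ℝ) + 1 + t)) ^ c) := by
      intro p hp; rw [hfst p hp]
    rw [Finset.sum_congr rfl hterm, Finset.sum_const]
    have hbase : (0:ℝ) ≤ (∏ j, AUV U V j ^ ((m:ℝ) + 1 + t)) ^ c := by
      apply Real.rpow_nonneg
      rw [prod_AUV U V hU hV]
      positivity
    rw [nsmul_eq_mul, ← ENNReal.ofReal_natCast M.card, ← ENNReal.ofReal_mul (by positivity)]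
    exact ENNReal.ofReal_le_ofReal (budget_real U V hU hV c t hc0 Nt hNt0 M.card m hcard)

end Budget


noncomputable section NtFacts
open Real

variable {U V : ℕ}

lemma cast_sub_one (hU : 2 ≤ U) : ((U - 1 : ℕ) : ℝ) = (U:ℝ) - 1 := by
  have h1 : 1 ≤ U := by omega
  push_cast [Nat.cast_sub h1]
  ring

lemma mul_ceil_div_ge_real (d : ℕ) (hd : 1 ≤ d) (y : ℝ) :
    (⌈y⌉ : ℝ) ≤ (d : ℝ) * (⌈y / (d:ℝ)⌉ : ℝ) := by exact_mod_cast mul_ceil_div_ge d hd y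

lemma ceil_base_mul_real (n : ℕ) (hn : 1 ≤ n) (y : ℝ) :
    (n:ℝ) * (⌈y⌉:ℝ) - n + 1 ≤ (⌈(n:ℝ) * y⌉ : ℝ) := by exact_mod_cast ceil_base_mul n hn y

lemma NtN_min_cast (U V : ℕ) (t : ℝ) :
    ((NtN U V t : ℕ) : ℝ) = min ((b1N U V t : ℕ):ℝ) ((b2N U V t : ℕ):ℝ) := by
  unfold NtN
  simp [Nat.cast_min]

lemma b1N_cast (hU : 2 ≤ U) (hV : 2 ≤ V) (t : ℝ) :
    ((b1N U V t : ℕ) : ℝ) = ((cdiv (U:ℝ) t : ℕ):ℝ) * ((cdiv (V:ℝ) (t+1) : ℕ):ℝ)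
      + ((cpow (U:ℝ) t : ℕ):ℝ) * ((cdiv (V:ℝ) t : ℕ):ℝ) := by
  unfold b1N; push_cast; ring

lemma b2N_cast (hU : 2 ≤ U) (hV : 2 ≤ V) (t : ℝ) :
    ((b2N U V t : ℕ) : ℝ) = ((cdiv (U:ℝ) (t+1) : ℕ):ℝ) * ((cdiv (V:ℝ) t : ℕ):ℝ)
      + ((cdiv (U:ℝ) t : ℕ):ℝ) * ((cpow (V:ℝ) t : ℕ):ℝ) := by
  unfold b2N; push_cast; ring

/-- real value of `NtN` equals the `Nt` of the theorem statement -/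
lemma NtN_cast (hU : 2 ≤ U) (hV : 2 ≤ V) (t : ℝ) :
    ((NtN U V t : ℕ) : ℝ) = min
      ((⌈(U : ℝ) ^ t / ((U : ℝ) - 1)⌉ : ℝ) * (⌈(V : ℝ) ^ (t + 1) / ((V : ℝ) - 1)⌉ : ℝ)
        + (⌈(V : ℝ) ^ t / ((V : ℝ) - 1)⌉ : ℝ) * (⌈(U : ℝ) ^ t⌉ : ℝ))
      ((⌈(U : ℝ) ^ (t + 1) / ((U : ℝ) - 1)⌉ : ℝ) * (⌈(V : ℝ) ^ t / ((V : ℝ) - 1)⌉ : ℝ)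
        + (⌈(U : ℝ) ^ t / ((U : ℝ) - 1)⌉ : ℝ) * (⌈(V : ℝ) ^ t⌉ : ℝ)) := by
  have hu := hu2 (U:=U) hU; have hv := hv2 (V:=V) hV
  rw [NtN_min_cast, b1N_cast hU hV, b2N_cast hU hV]
  simp only [cdiv_cast hu, cdiv_cast hv, cpow_cast hu, cpow_cast hv]
  congr 1 <;> ring

/-- key lower bound for branch A -/
lemma NtN_lower (hU : 2 ≤ U) (hV : 2 ≤ V) (t : ℝ) (ht : 0 < t) :
    min (U:ℝ) (V:ℝ) * (cpow (U:ℝ) t : ℝ) * (cpow (V:ℝ) t : ℝ)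
      ≤ ((U:ℝ) - 1) * ((V:ℝ) - 1) * ((NtN U V t : ℕ) : ℝ) := by
  have hu := hu2 (U:=U) hU; have hv := hv2 (V:=V) hV
  have hu0 : (0:ℝ) < U := by linarith
  have hv0 : (0:ℝ) < V := by linarith
  have hcastU := cast_sub_one hU
  have hcastV := cast_sub_one hV
  set A : ℝ := ((cdiv (U:ℝ) t : ℕ) : ℝ) with hA
  set B : ℝ := ((cdiv (V:ℝ) (t+1) : ℕ) : ℝ) with hB
  set D : ℝ := ((cdiv (V:ℝ) t : ℕ) : ℝ) with hD
  set A2 : ℝ := ((cdiv (U:ℝ) (t+1) : ℕ) : ℝ) with hA2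
  set E : ℝ := ((cpow (U:ℝ) t : ℕ) : ℝ) with hE
  set Z : ℝ := ((cpow (V:ℝ) t : ℕ) : ℝ) with hZ
  have hA1 : 1 ≤ A := by rw [hA]; exact_mod_cast cdiv_pos hu t
  have hB1 : 1 ≤ B := by rw [hB]; exact_mod_cast cdiv_pos hv (t+1)
  have hD1 : 1 ≤ D := by rw [hD]; exact_mod_cast cdiv_pos hv t
  have hA21 : 1 ≤ A2 := by rw [hA2]; exact_mod_cast cdiv_pos hu (t+1)
  have hE1 : 1 ≤ E := by rw [hE]; exact_mod_cast cpow_pos hu t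
  have hZ1 : 1 ≤ Z := by rw [hZ]; exact_mod_cast cpow_pos hv t
  have hUA : E ≤ ((U:ℝ) - 1) * A := by
    rw [hE, hA, cpow_cast hu, cdiv_cast hu]
    have h := mul_ceil_div_ge_real (U - 1) (by omega) ((U:ℝ) ^ t)
    rwa [hcastU] at h
  have hUA2 : ((⌈(U:ℝ) ^ (t+1)⌉ : ℤ) : ℝ) ≤ ((U:ℝ) - 1) * A2 := by
    rw [hA2, cdiv_cast hu]
    have h := mul_ceil_div_ge_real (U - 1) (by omega) ((U:ℝ) ^ (t+1))
    rwa [hcastU] at h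
  have hVB : ((⌈(V:ℝ) ^ (t+1)⌉ : ℤ) : ℝ) ≤ ((V:ℝ) - 1) * B := by
    rw [hB, cdiv_cast hv]
    have h := mul_ceil_div_ge_real (V - 1) (by omega) ((V:ℝ) ^ (t+1))
    rwa [hcastV] at h
  have hVD : Z ≤ ((V:ℝ) - 1) * D := by
    rw [hZ, hD, cpow_cast hv, cdiv_cast hv]
    have h := mul_ceil_div_ge_real (V - 1) (by omega) ((V:ℝ) ^ t)
    rwa [hcastV] at h
  have hVZ : (V:ℝ) * Z - V + 1 ≤ ((⌈(V:ℝ) ^ (t+1)⌉ : ℤ) : ℝ) := by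
    rw [hZ, cpow_cast hv]
    have h := ceil_base_mul_real V (by omega) ((V:ℝ) ^ t)
    have he : (V:ℝ) * (V:ℝ) ^ t = (V:ℝ) ^ (t+1) := by
      rw [Real.rpow_add hv0, Real.rpow_one]; ring
    rwa [he] at h
  have hUZ : (U:ℝ) * E - U + 1 ≤ ((⌈(U:ℝ) ^ (t+1)⌉ : ℤ) : ℝ) := by
    rw [hE, cpow_cast hu]
    have h := ceil_base_mul_real U (by omega) ((U:ℝ) ^ t)
    have he : (U:ℝ) * (U:ℝ) ^ t = (U:ℝ) ^ (t+1) := by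
      rw [Real.rpow_add hu0, Real.rpow_one]; ring
    rwa [he] at h
  have hb1 : (U:ℝ) * E * Z ≤ ((U:ℝ) - 1) * ((V:ℝ) - 1) * ((b1N U V t : ℕ) : ℝ) := by
    rw [b1N_cast hU hV, ← hA, ← hB, ← hE, ← hD]
    have hid : ((U:ℝ) - 1) * ((V:ℝ) - 1) * (A * B + E * D)
        = (((U:ℝ) - 1) * A) * (((V:ℝ) - 1) * B) + (((V:ℝ) - 1) * D) * (((U:ℝ) - 1) * E) := by
      ring
    rw [hid]
    have k1 : E * ((V:ℝ) * Z - V + 1) ≤ (((U:ℝ) - 1) * A) * (((V:ℝ) - 1) * B) := by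
      calc E * ((V:ℝ) * Z - V + 1) ≤ E * ((⌈(V:ℝ) ^ (t+1)⌉ : ℤ) : ℝ) :=
            mul_le_mul_of_nonneg_left hVZ (by linarith)
      _ ≤ (((U:ℝ) - 1) * A) * (((V:ℝ) - 1) * B) := by
            have w1 : (0:ℝ) ≤ ((⌈(V:ℝ) ^ (t+1)⌉ : ℤ) : ℝ) := by
              have := ceil_ge_one (rpow_pos2 hv (t+1))
              exact_mod_cast (by omega : (0:ℤ) ≤ ⌈(V:ℝ) ^ (t+1)⌉)
            have w2 : (0:ℝ) ≤ ((U:ℝ) - 1) * A := mul_nonneg (by linarith) (by linarith)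
            exact mul_le_mul hUA hVB w1 w2
    have k2 : Z * (((U:ℝ) - 1) * E) ≤ (((V:ℝ) - 1) * D) * (((U:ℝ) - 1) * E) :=
      mul_le_mul_of_nonneg_right hVD (mul_nonneg (by linarith) (by linarith))
    have hone : E * ((V:ℝ) * Z - V + 1) + Z * (((U:ℝ) - 1) * E) - (U:ℝ) * E * Z
        = E * ((V:ℝ) - 1) * (Z - 1) := by ring
    have hnn : 0 ≤ E * ((V:ℝ) - 1) * (Z - 1) := by
      apply mul_nonneg (mul_nonneg (by linarith) (by linarith)) (by linarith)
    linarith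
  have hb2 : (V:ℝ) * E * Z ≤ ((U:ℝ) - 1) * ((V:ℝ) - 1) * ((b2N U V t : ℕ) : ℝ) := by
    rw [b2N_cast hU hV, ← hA, ← hA2, ← hD, ← hZ]
    have hid : ((U:ℝ) - 1) * ((V:ℝ) - 1) * (A2 * D + A * Z)
        = (((V:ℝ) - 1) * D) * (((U:ℝ) - 1) * A2) + (((U:ℝ) - 1) * A) * (((V:ℝ) - 1) * Z) := by
      ring
    rw [hid]
    have k1 : Z * ((U:ℝ) * E - U + 1) ≤ (((V:ℝ) - 1) * D) * (((U:ℝ) - 1) * A2) := by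
      calc Z * ((U:ℝ) * E - U + 1) ≤ Z * ((⌈(U:ℝ) ^ (t+1)⌉ : ℤ) : ℝ) :=
            mul_le_mul_of_nonneg_left hUZ (by linarith)
      _ ≤ (((V:ℝ) - 1) * D) * (((U:ℝ) - 1) * A2) := by
            have w1 : (0:ℝ) ≤ ((⌈(U:ℝ) ^ (t+1)⌉ : ℤ) : ℝ) := by
              have := ceil_ge_one (rpow_pos2 hu (t+1))
              exact_mod_cast (by omega : (0:ℤ) ≤ ⌈(U:ℝ) ^ (t+1)⌉)
            have w2 : (0:ℝ) ≤ ((V:ℝ) - 1) * D := mul_nonneg (by linarith) (by linarith)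
            exact mul_le_mul hVD hUA2 w1 w2
    have k2 : E * (((V:ℝ) - 1) * Z) ≤ (((U:ℝ) - 1) * A) * (((V:ℝ) - 1) * Z) :=
      mul_le_mul_of_nonneg_right hUA (mul_nonneg (by linarith) (by linarith))
    have hone : Z * ((U:ℝ) * E - U + 1) + E * (((V:ℝ) - 1) * Z) - (V:ℝ) * E * Z
        = Z * ((U:ℝ) - 1) * (E - 1) := by ring
    have hnn : 0 ≤ Z * ((U:ℝ) - 1) * (E - 1) := by
      apply mul_nonneg (mul_nonneg (by linarith) (by linarith)) (by linarith)
    linarith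
  rw [NtN_min_cast]
  rcases le_total ((b1N U V t : ℕ) : ℝ) ((b2N U V t : ℕ) : ℝ) with h | h
  · rw [min_eq_left h]
    have h2 : min (U:ℝ) (V:ℝ) ≤ (U:ℝ) := min_le_left _ _
    have h3 : (0:ℝ) ≤ E * Z := mul_nonneg (by linarith) (by linarith)
    have h4 := mul_le_mul_of_nonneg_right h2 h3
    calc min (U:ℝ) (V:ℝ) * E * Z = min (U:ℝ) (V:ℝ) * (E * Z) := by ring
    _ ≤ (U:ℝ) * (E * Z) := h4
    _ = (U:ℝ) * E * Z := by ring
    _ ≤ _ := hb1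
  · rw [min_eq_right h]
    have h2 : min (U:ℝ) (V:ℝ) ≤ (V:ℝ) := min_le_right _ _
    have h3 : (0:ℝ) ≤ E * Z := mul_nonneg (by linarith) (by linarith)
    have h4 := mul_le_mul_of_nonneg_right h2 h3
    calc min (U:ℝ) (V:ℝ) * E * Z = min (U:ℝ) (V:ℝ) * (E * Z) := by ring
    _ ≤ (V:ℝ) * (E * Z) := h4
    _ = (V:ℝ) * E * Z := by ring
    _ ≤ _ := hb2

end NtFacts

noncomputable section Bridge
open Real

variable {U V : ℕ}

lemma hw_bridge0 {x : ℝ} (hx : 2 ≤ x) (k : ℕ) : x⁻¹ ^ ((k:ℕ):ℝ) = hw x k := by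
  have hx0 : (0:ℝ) < x := by linarith
  rw [Real.inv_rpow hx0.le, Real.rpow_natCast]
  rfl

lemma hw_bridge {x : ℝ} (hx : 2 ≤ x) (k : ℕ) : x⁻¹ ^ ((k:ℝ) + 1) = hw x (k+1) := by
  have hx0 : (0:ℝ) < x := by linarith
  rw [show ((k:ℝ) + 1) = ((k+1:ℕ):ℝ) by push_cast; ring]
  exact hw_bridge0 hx (k+1)

lemma NtN_pos (hU : 2 ≤ U) (hV : 2 ≤ V) (t : ℝ) : 1 ≤ NtN U V t := by
  have hu := hu2 (U:=U) hU; have hv := hv2 (V:=V) hV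
  have h1 := cdiv_pos hu t
  have h2 := cdiv_pos hv (t+1)
  have h3 := cdiv_pos hv t
  have h4 := cpow_pos hu t
  have h5 := cdiv_pos hu (t+1)
  have h6 := cpow_pos hv t
  apply Nat.le_min.mpr
  constructor
  · have := Nat.mul_le_mul h1 h2
    unfold b1N; omega
  · have := Nat.mul_le_mul h5 h3
    unfold b2N; omega

lemma branchA_size (hU : 2 ≤ U) (hV : 2 ≤ V)
    (hnb : ¬ (4*U*V ≤ 9*((U-1)*(V-1)))) : U ≤ 8 ∧ V ≤ 8 := by
  push_neg at hnb
  constructor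
  · by_contra hcon
    push_neg at hcon
    have h1 : 8*U ≤ 9*(U-1) := by omega
    have h2 : V ≤ 2*(V-1) := by omega
    have h3 := Nat.mul_le_mul h1 h2
    nlinarith
  · by_contra hcon
    push_neg at hcon
    have h1 : 8*V ≤ 9*(V-1) := by omega
    have h2 : U ≤ 2*(U-1) := by omega
    have h3 := Nat.mul_le_mul h1 h2
    nlinarith

lemma rpow_c_le (hU : 2 ≤ U) (hV : 2 ≤ V) {c : ℝ} (hc0 : 0 < c) (hc1 : c < 1) :
    ((U:ℝ) * V) ^ c ≤ (U:ℝ) * V := by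
  have hu := hu2 (U:=U) hU; have hv := hv2 (V:=V) hV
  have h1 : (1:ℝ) ≤ (U:ℝ) * V := by nlinarith
  calc ((U:ℝ) * V) ^ c ≤ ((U:ℝ) * V) ^ (1:ℝ) :=
        Real.rpow_le_rpow_of_exponent_le h1 (by linarith)
  _ = (U:ℝ) * V := Real.rpow_one _

/-- card bound for branch B -/
lemma cardB_bound (hU : 2 ≤ U) (hV : 2 ≤ V) {c t : ℝ} (hc0 : 0 < c) (hc1 : c < 1)
    (hbr : 4*U*V ≤ 9*((U-1)*(V-1))) (n : ℕ) (hn : n ≤ 4 * NtN U V t) :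
    (n:ℝ) * ((U:ℝ) * V) ^ c ≤ 9 * ((U:ℝ) - 1) * ((V:ℝ) - 1) * ((NtN U V t : ℕ) : ℝ) := by
  have hu := hu2 (U:=U) hU; have hv := hv2 (V:=V) hV
  have hNn : (1:ℝ) ≤ ((NtN U V t : ℕ) : ℝ) := by exact_mod_cast NtN_pos hU hV t
  have hc : ((U:ℝ) * V) ^ c ≤ (U:ℝ) * V := rpow_c_le hU hV hc0 hc1
  have hcpos : (0:ℝ) < ((U:ℝ) * V) ^ c := Real.rpow_pos_of_pos (by nlinarith) c
  have hn' : (n:ℝ) ≤ 4 * ((NtN U V t : ℕ) : ℝ) := by exact_mod_cast hn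
  have hbr' : 4 * ((U:ℝ) * V) ≤ 9 * (((U:ℝ) - 1) * ((V:ℝ) - 1)) := by
    have := (Nat.cast_le (α := ℝ)).mpr hbr
    push_cast at this
    rw [cast_sub_one hU, cast_sub_one hV] at this
    linarith
  calc (n:ℝ) * ((U:ℝ) * V) ^ c ≤ (4 * ((NtN U V t : ℕ) : ℝ)) * ((U:ℝ) * V) :=
        mul_le_mul hn' hc hcpos.le (by linarith)
  _ = (4 * ((U:ℝ) * V)) * ((NtN U V t : ℕ) : ℝ) := by ring
  _ ≤ (9 * (((U:ℝ) - 1) * ((V:ℝ) - 1))) * ((NtN U V t : ℕ) : ℝ) :=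
        mul_le_mul_of_nonneg_right hbr' (by linarith)
  _ = 9 * ((U:ℝ) - 1) * ((V:ℝ) - 1) * ((NtN U V t : ℕ) : ℝ) := by ring

/-- card bound for branch A -/
lemma cardA_bound (hU : 2 ≤ U) (hV : 2 ≤ V) {c t : ℝ} (hc0 : 0 < c) (hc1 : c < 1) (ht : 0 < t)
    (hnb : ¬ (4*U*V ≤ 9*((U-1)*(V-1)))) (n : ℕ) (hn : n ≤ cpow (U:ℝ) t * cpow (V:ℝ) t) :
    (n:ℝ) * ((U:ℝ) * V) ^ c ≤ 9 * ((U:ℝ) - 1) * ((V:ℝ) - 1) * ((NtN U V t : ℕ) : ℝ) := by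
  have hu := hu2 (U:=U) hU; have hv := hv2 (V:=V) hV
  obtain ⟨hU8, hV8⟩ := branchA_size hU hV hnb
  have hu8 : (U:ℝ) ≤ 8 := by exact_mod_cast hU8
  have hv8 : (V:ℝ) ≤ 8 := by exact_mod_cast hV8
  have hc : ((U:ℝ) * V) ^ c ≤ (U:ℝ) * V := rpow_c_le hU hV hc0 hc1
  have hcpos : (0:ℝ) < ((U:ℝ) * V) ^ c := Real.rpow_pos_of_pos (by nlinarith) c
  set E : ℝ := ((cpow (U:ℝ) t : ℕ) : ℝ) with hE
  set Z : ℝ := ((cpow (V:ℝ) t : ℕ) : ℝ) with hZ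
  have hE1 : 1 ≤ E := by rw [hE]; exact_mod_cast cpow_pos hu t
  have hZ1 : 1 ≤ Z := by rw [hZ]; exact_mod_cast cpow_pos hv t
  have hn' : (n:ℝ) ≤ E * Z := by rw [hE, hZ]; exact_mod_cast hn
  have hminb : (U:ℝ) * V ≤ 8 * min (U:ℝ) (V:ℝ) := by
    rcases le_total (U:ℝ) (V:ℝ) with h | h
    · rw [min_eq_left h]; nlinarith
    · rw [min_eq_right h]; nlinarith
  have hlow := NtN_lower hU hV t ht
  have hmin1 : (1:ℝ) ≤ min (U:ℝ) (V:ℝ) := by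
    apply le_min <;> linarith
  calc (n:ℝ) * ((U:ℝ) * V) ^ c ≤ (E * Z) * ((U:ℝ) * V) :=
        mul_le_mul hn' hc hcpos.le (by nlinarith)
  _ ≤ (E * Z) * (8 * min (U:ℝ) (V:ℝ)) :=
        mul_le_mul_of_nonneg_left hminb (by nlinarith)
  _ = 8 * (min (U:ℝ) (V:ℝ) * E * Z) := by ring
  _ ≤ 9 * (min (U:ℝ) (V:ℝ) * E * Z) := by nlinarith
  _ ≤ 9 * (((U:ℝ) - 1) * ((V:ℝ) - 1) * ((NtN U V t : ℕ) : ℝ)) := by linarith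
  _ = 9 * ((U:ℝ) - 1) * ((V:ℝ) - 1) * ((NtN U V t : ℕ) : ℝ) := by ring

end Bridge

/-- **Winning condition for `𝒞𝒟(U,V)` sets.** Let `U, V ∈ ℕ \ {0,1}`, `c ∈ (0,1)` and `t > 0`.
Set `N_t = min{⌈U^t/(U−1)⌉⌈V^{t+1}/(V−1)⌉ + ⌈V^t/(V−1)⌉⌈U^t⌉,
⌈U^{t+1}/(U−1)⌉⌈V^t/(V−1)⌉ + ⌈U^t/(U−1)⌉⌈V^t⌉}` and
`α(c,t) = (9(U−1)(V−1)N_t)^{1/c}(UV)^{−(1+t)}`.  If `F ∈ 𝒞𝒟(U, V)`, then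
`F ∪ (ℝ² \ B[0,1])` is `(α(c,t), A_{U,V}, c, 1, 1)`-winning. -/
theorem rcd_winning (U V : ℕ) (hU : 2 ≤ U) (hV : 2 ≤ V)
    (c : ℝ) (hc : c ∈ Set.Ioo (0 : ℝ) 1) (t : ℝ) (ht : 0 < t)
    (F : Set (Fin 2 → ℝ)) (hF : RCD U V F)
    (Nt : ℝ)
    (hNt : Nt = min
      ((⌈(U : ℝ) ^ t / ((U : ℝ) - 1)⌉ : ℝ) * (⌈(V : ℝ) ^ (t + 1) / ((V : ℝ) - 1)⌉ : ℝ)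
        + (⌈(V : ℝ) ^ t / ((V : ℝ) - 1)⌉ : ℝ) * (⌈(U : ℝ) ^ t⌉ : ℝ))
      ((⌈(U : ℝ) ^ (t + 1) / ((U : ℝ) - 1)⌉ : ℝ) * (⌈(V : ℝ) ^ t / ((V : ℝ) - 1)⌉ : ℝ)
        + (⌈(U : ℝ) ^ t / ((U : ℝ) - 1)⌉ : ℝ) * (⌈(V : ℝ) ^ t⌉ : ℝ))) :
    IsWinning (AUV U V)
      ((9 * ((U : ℝ) - 1) * ((V : ℝ) - 1) * Nt) ^ (1 / c) * ((U : ℝ) * V) ^ (-(1 + t))) c 1 1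
      (F ∪ (Set.univ \ Metric.closedBall 0 1)) := by
  classical
  obtain ⟨hc0, hc1⟩ := hc
  obtain ⟨corner, ctr, hctr0, hrec0, hFeq⟩ := hF
  have hrec : Hrec U V corner ctr := hrec0
  have hu := hu2 (U:=U) hU
  have hv := hv2 (V:=V) hV
  have hNtN : Nt = ((NtN U V t : ℕ) : ℝ) := by rw [hNt, NtN_cast hU hV t]
  have hNtpos : 0 < Nt := by
    rw [hNtN]
    have h1 := NtN_pos hU hV t
    have h2 : (1:ℝ) ≤ ((NtN U V t : ℕ) : ℝ) := by exact_mod_cast h1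
    linarith
  refine ⟨fun _r m bb =>
    if 4*U*V ≤ 9*((U-1)*(V-1)) then
      (↑(BFin corner ctr t m (bb (Fin.last m))) : Set (ℝ × (Fin 2 → ℝ)))
    else if m = 0 then
      (↑(gridF U V (((0:ℕ):ℝ) + 1 + t) (bb (Fin.last m) 0) (bb (Fin.last m) 1)
        (hw (U:ℝ) 1) (hw (V:ℝ) 1) (cpow (U:ℝ) t) (cpow (V:ℝ) t)) : Set (ℝ × (Fin 2 → ℝ)))
    else (∅ : Set (ℝ × (Fin 2 → ℝ))), ?_, ?_⟩
  · -- legality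
    intro r m bb _ _ _
    dsimp only
    by_cases hbr : 4*U*V ≤ 9*((U-1)*(V-1))
    · rw [if_pos hbr]
      refine legal_of_fin U V hU hV c t hc0 ht Nt hNtpos m _
        (fun p hp => BFin_fst hp) ?_
      rw [hNtN]
      exact cardB_bound hU hV hc0 hc1 hbr _ (BFin_card hU hV hrec t m _)
    · rw [if_neg hbr]
      by_cases hm : m = 0
      · subst hm
        rw [if_pos rfl]
        refine legal_of_fin U V hU hV c t hc0 ht Nt hNtpos 0 _
          (fun p hp => gridF_fst hp) ?_
        rw [hNtN]
        refine cardA_bound hU hV hc0 hc1 ht hbr _ ?_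
        exact gridF_card _ _ _ _ _ _ _ _ _
      · rw [if_neg hm]
        exact legal_empty _ _ _ _ hc0
  · -- winning
    intro r b hr1 hr2 _hnest x hxall hndel
    have hr : r = 1 := le_antisymm hr2 hr1
    subst hr
    by_cases hball : x ∈ Metric.closedBall (0 : Fin 2 → ℝ) 1
    swap
    · exact Or.inr ⟨trivial, hball⟩
    have hxm : ∀ m : ℕ, |x 0 - b m 0| ≤ hw (U:ℝ) (m+1) ∧ |x 1 - b m 1| ≤ hw (V:ℝ) (m+1) := by
      intro m
      have h := (mem_gameBox_iff ((m:ℝ) + 1) 1 (b m) x).mp (hxall m)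
      rw [hw_bridge hu m, hw_bridge hv m, mul_one, mul_one] at h
      exact h
    by_cases hbr : 4*U*V ≤ 9*((U-1)*(V-1))
    · -- branch B : real strategy
      have hbase : |x 0 - ctr [] 0| ≤ hw (U:ℝ) 0 ∧ |x 1 - ctr [] 1| ≤ hw (V:ℝ) 0 := by
        rw [hctr0]
        rw [Metric.mem_closedBall, dist_pi_le_iff (by norm_num : (0:ℝ) ≤ 1)] at hball
        have h0 := hball 0
        have h1 := hball 1
        rw [Real.dist_eq] at h0 h1
        simp only [Pi.zero_apply, sub_zero] at h0 h1
        simp only [Pi.zero_apply, hw, pow_zero, inv_one]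
        exact ⟨by simpa using h0, by simpa using h1⟩
      have main : ∀ m : ℕ, ∃ ω : List (Alp U V), ω.length = m
          ∧ |x 0 - ctr ω 0| ≤ hw (U:ℝ) m ∧ |x 1 - ctr ω 1| ≤ hw (V:ℝ) m := by
        intro m
        induction m with
        | zero => exact ⟨[], rfl, hbase.1, hbase.2⟩
        | succ m ih =>
          obtain ⟨ω, hlen, hx0, hx1⟩ := ih
          obtain ⟨k, hk, hbk⟩ := region_pick1 hu (U-1) (cast_sub_one hU) (by omega)
            (ctr ω 0) (x 0) m hx0
          obtain ⟨l, hl, hbl⟩ := region_pick1 hv (V-1) (cast_sub_one hV) (by omega)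
            (ctr ω 1) (x 1) m hx1
          have hG0 : regionCtr ctr ω (⟨k, hk⟩, ⟨l, hl⟩) 0
              = ctr ω 0 + (2*(k:ℝ) + 2 - (U:ℝ)) * rg (U:ℝ) m := by
            unfold regionCtr
            simp only [Matrix.cons_val_zero, hlen, Fin.val_mk]
            ring
          have hG1 : regionCtr ctr ω (⟨k, hk⟩, ⟨l, hl⟩) 1
              = ctr ω 1 + (2*(l:ℝ) + 2 - (V:ℝ)) * rg (V:ℝ) m := by
            unfold regionCtr
            simp only [Matrix.cons_val_one, Matrix.head_cons, Matrix.cons_val_zero, hlen, Fin.val_mk]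
            ring
          have hrx0 : |x 0 - regionCtr ctr ω (⟨k, hk⟩, ⟨l, hl⟩) 0| ≤ rg (U:ℝ) m := by
            rw [hG0]; exact hbk
          have hrx1 : |x 1 - regionCtr ctr ω (⟨k, hk⟩, ⟨l, hl⟩) 1| ≤ rg (V:ℝ) m := by
            rw [hG1]; exact hbl
          have hsel : (ω, ((⟨k, hk⟩, ⟨l, hl⟩) : Alp U V)) ∈ SelFin ctr m (b m) := by
            rw [mem_SelFin]
            refine ⟨hlen, ?_, ?_⟩
            · have t1 := abs_sub_le (regionCtr ctr ω (⟨k, hk⟩, ⟨l, hl⟩) 0) (x 0) (b m 0)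
              have t2 : |regionCtr ctr ω (⟨k, hk⟩, ⟨l, hl⟩) 0 - x 0| ≤ rg (U:ℝ) m := by
                rw [abs_sub_comm]; exact hrx0
              have t3 := (hxm m).1
              linarith
            · have t1 := abs_sub_le (regionCtr ctr ω (⟨k, hk⟩, ⟨l, hl⟩) 1) (x 1) (b m 1)
              have t2 : |regionCtr ctr ω (⟨k, hk⟩, ⟨l, hl⟩) 1 - x 1| ≤ rg (V:ℝ) m := by
                rw [abs_sub_comm]; exact hrx1
              have t3 := (hxm m).2
              linarith
          by_cases hch : |x 0 - ctr (ω ++ [(⟨k, hk⟩, ⟨l, hl⟩)]) 0| ≤ hw (U:ℝ) (m+1)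
              ∧ |x 1 - ctr (ω ++ [(⟨k, hk⟩, ⟨l, hl⟩)]) 1| ≤ hw (V:ℝ) (m+1)
          · exact ⟨ω ++ [(⟨k, hk⟩, ⟨l, hl⟩)], by simp [hlen], hch.1, hch.2⟩
          · exfalso
            obtain ⟨p, hp, hxp⟩ := regionCover_covers hU hV hrec t ht m ω
              (⟨k, hk⟩, ⟨l, hl⟩) hlen x hrx0 hrx1 hch
            apply hndel
            refine Set.mem_iUnion.mpr ⟨m, ?_⟩
            refine Set.mem_biUnion ?_ hxp
            show p ∈ (if 4*U*V ≤ 9*((U-1)*(V-1)) then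
                (↑(BFin corner ctr t m ((fun i : Fin (m+1) => b ↑i) (Fin.last m)))
                  : Set (ℝ × (Fin 2 → ℝ)))
              else if m = 0 then _ else _)
            rw [if_pos hbr]
            refine Finset.mem_coe.mpr (Finset.mem_biUnion.mpr ⟨(ω, (⟨k, hk⟩, ⟨l, hl⟩)), ?_, hp⟩)
            have he : ((fun i : Fin (m+1) => b ↑i) (Fin.last m)) = b m := by
              simp [Fin.val_last]
            rw [he]
            exact hsel
      left
      rw [hFeq]
      refine Set.mem_iInter.mpr fun k => ?_
      obtain ⟨ω, hlen, h0, h1⟩ := main k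
      refine Set.mem_biUnion (show ω ∈ {ω : List (Alp U V) | ω.length = k} from hlen) ?_
      rw [mem_gameBox_iff]
      constructor
      · rw [hw_bridge0 hu k, mul_one]; exact h0
      · rw [hw_bridge0 hv k, mul_one]; exact h1
    · -- branch A : the whole first window is deleted
      exfalso
      obtain ⟨p, hp, hxp⟩ := gridF_cover hU hV (((0:ℕ):ℝ) + 1 + t) (b 0 0) (b 0 1)
        (hw (U:ℝ) 1) (hw (V:ℝ) 1) (cpow (U:ℝ) t) (cpow (V:ℝ) t)
        (cpow_pos hu t) (cpow_pos hv t) (count_hw_succ hu 0 t) (count_hw_succ hv 0 t)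
        x (hxm 0).1 (hxm 0).2
      apply hndel
      refine Set.mem_iUnion.mpr ⟨0, ?_⟩
      refine Set.mem_biUnion ?_ hxp
      show p ∈ (if 4*U*V ≤ 9*((U-1)*(V-1)) then
          (↑(BFin corner ctr t 0 ((fun i : Fin (0+1) => b ↑i) (Fin.last 0)))
            : Set (ℝ × (Fin 2 → ℝ)))
        else if 0 = 0 then
          (↑(gridF U V (((0:ℕ):ℝ) + 1 + t) ((fun i : Fin (0+1) => b ↑i) (Fin.last 0) 0)
            ((fun i : Fin (0+1) => b ↑i) (Fin.last 0) 1)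
            (hw (U:ℝ) 1) (hw (V:ℝ) 1) (cpow (U:ℝ) t) (cpow (V:ℝ) t))
            : Set (ℝ × (Fin 2 → ℝ)))
        else (∅ : Set (ℝ × (Fin 2 → ℝ))))
      rw [if_neg hbr, if_pos rfl]
      exact Finset.mem_coe.mpr hp
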